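/- arXiv:1602.06680 — 6 statements merged into one kernel-verified Lean document; each statement's English description precedes it below -/
import Mathlib

section
/- Let G be a countable group acting in a measure-preserving way on a standard probability space (X, μ), and let T ⊆ G be a finite subset. Then there exists a finite Borel partition β of X such that for every x ∈ X, each class of β contains at most one element of the orbit piece T · x. -/
open MeasureTheory Set
open scoped ENNReal NNReal

/-- A countable (or arbitrary indexed) measurable partition of `X`. -/
def IsCtblPart {X : Type*} [MeasurableSpace X] {ι : Type*} (A : ι → Set X) : Prop :=
  (∀ n, MeasurableSet (A n)) ∧ Pairwise (Function.onFun Disjoint A) ∧ (⋃ n, A n) = Set.univ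

/-- Conditional Shannon entropy of a partition relative to a sub-σ-algebra,
valued in `ℝ≥0∞`, defined via conditional expectations of indicators. -/
noncomputable def condEnt {X : Type*} [MeasurableSpace X] {ι : Type*}
    (μ : Measure X) (F : MeasurableSpace X) (A : ι → Set X) : ℝ≥0∞ :=
  ∫⁻ x, ∑' n : ι, ENNReal.ofReal
    (Real.negMulLog ((μ[Set.indicator (A n) (fun _ => (1 : ℝ)) | F]) x)) ∂μ

/-- Shannon entropy of a partition. -/
noncomputable def entPart {X : Type*} [MeasurableSpace X] {ι : Type*}
    (μ : Measure X) (A : ι → Set X) : ℝ≥0∞ :=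
  ∑' n : ι, ENNReal.ofReal (Real.negMulLog (μ (A n)).toReal)

/-- The σ-algebra generated by a partition. -/
def partSigma {X : Type*} [MeasurableSpace X] {ι : Type*} (A : ι → Set X) :
    MeasurableSpace X :=
  .generateFrom {s | ∃ n, s = A n}

/-- The smallest `G`-invariant σ-algebra containing a family of sets. -/
def sigmaGen (G : Type*) {X : Type*} [Group G] [MulAction G X] [MeasurableSpace X]
    {ι : Type*} (A : ι → Set X) : MeasurableSpace X :=
  .generateFrom {s | ∃ (g : G) (n : ι), s = (g • ·) ⁻¹' (A n)}

/-- The σ-algebra of `G`-invariant Borel sets. -/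
def invSigma (G X : Type*) [Group G] [MulAction G X] [MeasurableSpace X] :
    MeasurableSpace X :=
  .generateFrom {s | MeasurableSet s ∧ ∀ g : G, (g • ·) ⁻¹' s = s}

/-- The action of `G` on `(X, μ)` is probability-measure-preserving. -/
def IsPmp (G : Type*) {X : Type*} [Group G] [MulAction G X] [MeasurableSpace X]
    (μ : Measure X) : Prop :=
  ∀ g : G, MeasurePreserving (fun x : X => g • x) μ μ

/-- Almost every orbit is infinite. -/
def Aperiodic (G : Type*) {X : Type*} [Group G] [MulAction G X] [MeasurableSpace X]
    (μ : Measure X) : Prop :=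
  μ {x : X | (MulAction.orbit G x).Finite} = 0

/-- The action is (essentially) free. -/
def FreeAction (G : Type*) {X : Type*} [Group G] [MulAction G X] [MeasurableSpace X]
    (μ : Measure X) : Prop :=
  μ {x : X | ∃ g : G, g ≠ 1 ∧ g • x = x} = 0

/-- A sub-σ-algebra is `G`-invariant. -/
def InvariantSub (G : Type*) {X : Type*} [Group G] [MulAction G X]
    (F : MeasurableSpace X) : Prop :=
  ∀ (g : G) (s : Set X), MeasurableSet[F] s → MeasurableSet[F] ((g • ·) ⁻¹' s)

/-- `m₁` is contained in `m₂` modulo `μ`-null sets. -/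
def LeModNull {X : Type*} [MeasurableSpace X] (μ : Measure X)
    (m₁ m₂ : MeasurableSpace X) : Prop :=
  ∀ s : Set X, MeasurableSet[m₁] s → ∃ t : Set X, MeasurableSet[m₂] t ∧ μ (symmDiff s t) = 0

/-- The σ-algebra `m` generates the Borel σ-algebra modulo `μ`-null sets. -/
def GenModNull {X : Type*} [MeasurableSpace X] (μ : Measure X)
    (m : MeasurableSpace X) : Prop :=
  ∀ s : Set X, MeasurableSet s → ∃ t : Set X, MeasurableSet[m] t ∧ μ (symmDiff s t) = 0

/-- Relative Rokhlin entropy of `G ↷ (X, μ)` relative to `F`. -/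
noncomputable def rokhlinEnt (G : Type*) {X : Type*} [Group G] [MulAction G X]
    [mX : MeasurableSpace X] (μ : Measure X) (F : MeasurableSpace X) : ℝ≥0∞ :=
  ⨅ (A : ℕ → Set X) (_ : @IsCtblPart X mX ℕ A)
    (_ : @GenModNull X mX μ (@sigmaGen G X _ _ mX ℕ A ⊔ F ⊔ @invSigma G X _ _ mX)),
    @condEnt X mX ℕ μ (F ⊔ @invSigma G X _ _ mX) A

/-- Outer Rokhlin entropy of a collection `C` of Borel sets relative to `F`. -/
noncomputable def outerRokEnt (G : Type*) {X : Type*} [Group G] [MulAction G X]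
    [mX : MeasurableSpace X] (μ : Measure X) (C : Set (Set X)) (F : MeasurableSpace X) : ℝ≥0∞ :=
  ⨅ (A : ℕ → Set X) (_ : @IsCtblPart X mX ℕ A)
    (_ : ∀ s ∈ C, ∃ t : Set X,
        MeasurableSet[@sigmaGen G X _ _ mX ℕ A ⊔ F ⊔ @invSigma G X _ _ mX] t ∧
          μ (symmDiff s t) = 0),
    @condEnt X mX ℕ μ (F ⊔ @invSigma G X _ _ mX) A

/-- `G ↷ (Y, ν)` weakly contains `G ↷ (Z, η)`. -/
def WeaklyContains (G : Type*) [Group G] {Y Z : Type*} [MeasurableSpace Y]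
    [MeasurableSpace Z] [MulAction G Y] [MulAction G Z]
    (ν : Measure Y) (η : Measure Z) : Prop :=
  letI : DecidableEq G := Classical.decEq G
  ∀ (k : ℕ) (γ : Fin k → Set Z), IsCtblPart γ → ∀ (T : Finset G) (ε : ℝ), 0 < ε →
    ∃ ζ : Fin k → Set Y, IsCtblPart ζ ∧
      ∑ f : (↥T → Fin k),
        |(ν (⋂ t : ↥T, ((t : G) • ·) ⁻¹' ζ (f t))).toReal -
         (η (⋂ t : ↥T, ((t : G) • ·) ⁻¹' γ (f t))).toReal| < ε

/-- `l₁` weakly contains `l₂` as joinings with the fixed action `G ↷ (X, μ)`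
(`l₁` a joining on `X × Y₁`, `l₂` a joining on `X × Y₂`). -/
def WCJoin (G : Type*) [Group G] {X Y₁ Y₂ : Type*} [MeasurableSpace X]
    [MeasurableSpace Y₁] [MeasurableSpace Y₂] [MulAction G X] [MulAction G Y₁]
    [MulAction G Y₂] (l₁ : Measure (X × Y₁)) (l₂ : Measure (X × Y₂)) : Prop :=
  letI : DecidableEq G := Classical.decEq G
  ∀ (m k : ℕ) (P : Fin m → Set X), IsCtblPart P → ∀ (γ : Fin k → Set Y₂), IsCtblPart γ →
    ∀ (T : Finset G) (ε : ℝ), 0 < ε →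
    ∃ ζ : Fin k → Set Y₁, IsCtblPart ζ ∧
      ∑ j : Fin m, ∑ f : (↥T → Fin k),
        |(l₁ (Prod.fst ⁻¹' P j ∩ Prod.snd ⁻¹' ⋂ t : ↥T, ((t : G) • ·) ⁻¹' ζ (f t))).toReal -
         (l₂ (Prod.fst ⁻¹' P j ∩ Prod.snd ⁻¹' ⋂ t : ↥T, ((t : G) • ·) ⁻¹' γ (f t))).toReal| < ε

/-- Ergodicity of a group action with respect to a (not necessarily probability) measure. -/
def ErgAction (G : Type*) [Group G] {X : Type*} [MeasurableSpace X] [MulAction G X]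
    (ν : Measure X) : Prop :=
  ∀ s : Set X, MeasurableSet s → (∀ g : G, (g • ·) ⁻¹' s = s) → ν s = 0 ∨ ν sᶜ = 0

/-- `ν` has exactly `n` ergodic components under the action of `G`. -/
def HasNErgComponents (G : Type*) [Group G] {X : Type*} [MeasurableSpace X]
    [MulAction G X] (ν : Measure X) (n : ℕ) : Prop :=
  ∃ Y : Fin n → Set X, (∀ i, MeasurableSet (Y i)) ∧
    Pairwise (Function.onFun Disjoint Y) ∧ ν (⋃ i, Y i)ᶜ = 0 ∧
    ∀ i, (∀ g : G, (g • ·) ⁻¹' Y i = Y i) ∧ 0 < ν (Y i) ∧ ErgAction G (ν.restrict (Y i))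


/-!
Put `S = {t₁ t₂⁻¹ : t₁, t₂ ∈ T}`; it suffices to colour `X` in a Borel way with finitely many
colours so that `x` and `s • x` get different colours whenever `s ∈ S` and `s • x ≠ x`,
i.e. to properly colour a Borel graph of degree at most `|T|²`, as in Kechris–Solecki–Todorcevic.
Through a Borel injection `e : X → ℝ`, colour `x` first by the pair `(n, ⌊2ⁿ e x⌋)`, where `n`
is least such that `e` moves every neighbour of `x` away from `e x` by at least `2⁻ⁿ`: this is a
proper Borel colouring with countably many colours. Then recolour greedily, treating the old
colours in increasing order and giving `x` the least colour not yet taken by a neighbour of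
smaller old colour. A point sees at most `|S|` such neighbours, so at most `|S| + 1` colours are
used; as `S` is symmetric, of two neighbours the one of larger old colour avoids the new colour
of the other.
-/

open Filter

namespace Finset

noncomputable def mex (s : Finset ℕ) : ℕ :=
  Nat.find (Infinite.exists_notMem_finset s)

theorem mex_notMem (s : Finset ℕ) : s.mex ∉ s :=
  Nat.find_spec (Infinite.exists_notMem_finset s)

theorem mex_le_card (s : Finset ℕ) : s.mex ≤ #s := by
  obtain ⟨k, hk, hks⟩ := exists_mem_notMem_of_card_lt_card (s := s) (t := range (#s + 1))
    (by simp)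
  exact (Nat.find_min' _ hks).trans (Nat.lt_succ_iff.1 (mem_range.1 hk))

end Finset

theorem isCtblPart_preimage_singleton {X α : Type*} [MeasurableSpace X] [MeasurableSpace α]
    [MeasurableSingletonClass α] {col : X → α} (hcol : Measurable col) :
    IsCtblPart fun a => col ⁻¹' {a} :=
  ⟨fun a => hcol (measurableSet_singleton a),
    fun _ _ hab => (disjoint_singleton.2 hab).preimage col,
    eq_univ_of_forall fun x => mem_iUnion.2 ⟨col x, rfl⟩⟩

section Coloring

variable {ι X : Type*} {f : ι → X → X}

variable (f) in
def IsProperColoring {α : Type*} (col : X → α) : Prop :=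
  ∀ i x, f i x ≠ x → col (f i x) ≠ col x

theorem floor_two_pow_mul_ne {a b : ℝ} {n : ℕ} (h : (1 / 2 : ℝ) ^ n ≤ |a - b|) :
    ⌊(2 : ℝ) ^ n * a⌋ ≠ ⌊(2 : ℝ) ^ n * b⌋ := by
  intro hfloor
  have hclose := Int.abs_sub_lt_one_of_floor_eq_floor hfloor
  rw [← mul_sub, abs_mul, abs_of_pos (by positivity)] at hclose
  have hfar : (1 : ℝ) ≤ 2 ^ n * |a - b| :=
    calc (1 : ℝ) = 2 ^ n * (1 / 2) ^ n := by rw [← mul_pow]; norm_num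
      _ ≤ 2 ^ n * |a - b| := by gcongr
  linarith

theorem exists_dyadic_separation [Finite ι] (e : X → ℝ) (x : X) :
    ∃ n : ℕ, ∀ i, e (f i x) ≠ e x → (1 / 2 : ℝ) ^ n ≤ |e (f i x) - e x| := by
  have hsmall : Tendsto (fun n : ℕ => (1 / 2 : ℝ) ^ n) atTop (nhds 0) :=
    tendsto_pow_atTop_nhds_zero_of_lt_one (by norm_num) (by norm_num)
  have h : ∀ i, ∀ᶠ n : ℕ in atTop, e (f i x) ≠ e x → (1 / 2 : ℝ) ^ n ≤ |e (f i x) - e x| := by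
    intro i
    by_cases hi : e (f i x) = e x
    · simp [hi]
    · filter_upwards [hsmall.eventually (gt_mem_nhds (abs_pos.2 (sub_ne_zero.2 hi)))]
        with n hn _ using hn.le
  exact (eventually_all.2 h).exists

theorem exists_measurable_nat_coloring [MeasurableSpace X] [Finite ι]
    (hf : ∀ i, Measurable (f i)) {e : X → ℝ} (he : Measurable e) (he_inj : Function.Injective e) :
    ∃ c : X → ℕ, Measurable c ∧ IsProperColoring f c := by
  classical
  let cell (n : ℕ) (x : X) : ℕ := Encodable.encode (n, ⌊(2 : ℝ) ^ n * e x⌋)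
  let sep (n : ℕ) (x : X) : Prop := ∀ i, e (f i x) ≠ e x → (1 / 2 : ℝ) ^ n ≤ |e (f i x) - e x|
  have hsep : ∀ x, ∃ n, sep n x := exists_dyadic_separation e
  refine ⟨fun x => cell (Nat.find (hsep x)) x, Measurable.find (fun n => ?_) (fun n => ?_) hsep,
    fun i x hx hcell => ?_⟩
  · exact (measurable_of_countable _).comp
      (measurable_const.prodMk (measurable_const.mul he).floor)
  · refine measurableSet_setOfPred.2 (Measurable.forall fun i => Measurable.imp ?_ ?_)
    · exact measurableSet_setOfPred.1 (measurableSet_eq_fun (he.comp (hf i)) he).compl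
    · exact measurableSet_setOfPred.1 (measurableSet_le measurable_const
        ((he.comp (hf i)).sub he).abs)
  obtain ⟨hn, hfloor⟩ := Prod.mk.inj (Encodable.encode_injective hcell)
  rw [hn] at hfloor
  exact floor_two_pow_mul_ne (Nat.find_spec (hsep x) i (he_inj.ne hx)) hfloor

section Greedy

variable [Fintype ι]

-- `greedyLayer f c n` has recoloured exactly the points of old colour `< n`.
variable (f) in
noncomputable def greedyLayer (c : X → ℕ) : ℕ → X → ℕ
  | 0, _ => 0
  | n + 1, x =>
    if c x = n then
      ((Finset.univ.filter fun i => c (f i x) < n).image fun i => greedyLayer c n (f i x)).mex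
    else greedyLayer c n x

variable (f) in
noncomputable def greedyColoring (c : X → ℕ) (x : X) : ℕ :=
  greedyLayer f c (c x + 1) x

variable {c : X → ℕ}

theorem greedyLayer_of_lt {m : ℕ} {x : X} (h : c x < m) :
    greedyLayer f c m x = greedyColoring f c x := by
  induction m, h using Nat.le_induction with
  | base => rfl
  | succ m hm ih => rw [greedyLayer, if_neg (by omega), ih]

theorem greedyColoring_eq_mex (x : X) :
    greedyColoring f c x =
      ((Finset.univ.filter fun i => c (f i x) < c x).image
        fun i => greedyColoring f c (f i x)).mex := by
  rw [greedyColoring, greedyLayer, if_pos rfl]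
  congr 1
  exact Finset.image_congr fun i hi => greedyLayer_of_lt (Finset.mem_filter.1 hi).2

theorem greedyColoring_le_card (x : X) : greedyColoring f c x ≤ Fintype.card ι := by
  rw [greedyColoring_eq_mex]
  exact (Finset.mex_le_card _).trans (Finset.card_image_le.trans (Finset.card_filter_le _ _))

theorem greedyColoring_ne_of_lt {i : ι} {x : X} (h : c (f i x) < c x) :
    greedyColoring f c (f i x) ≠ greedyColoring f c x := by
  intro heq
  apply Finset.mex_notMem
    ((Finset.univ.filter fun i => c (f i x) < c x).image fun i => greedyColoring f c (f i x))
  rw [← greedyColoring_eq_mex, ← heq]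
  exact Finset.mem_image_of_mem _ (Finset.mem_filter.2 ⟨Finset.mem_univ i, h⟩)

theorem IsProperColoring.greedyColoring (hsymm : ∀ i, ∃ j, ∀ x, f j (f i x) = x)
    (hc : IsProperColoring f c) : IsProperColoring f (greedyColoring f c) := by
  intro i x hx
  rcases (hc i x hx).lt_or_gt with h | h
  · exact greedyColoring_ne_of_lt h
  · obtain ⟨j, hj⟩ := hsymm i
    have hback := greedyColoring_ne_of_lt (f := f) (i := j) (x := f i x) (by rwa [hj])
    rw [hj] at hback
    exact hback.symm

variable [MeasurableSpace X]

theorem measurable_greedyLayer (hf : ∀ i, Measurable (f i)) (hc : Measurable c) (n : ℕ) :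
    Measurable (greedyLayer f c n) := by
  induction n with
  | zero => exact measurable_const
  | succ n ih =>
    let next (v : ι → ℕ × ℕ) : ℕ :=
      ((Finset.univ.filter fun i => (v i).1 < n).image fun i => (v i).2).mex
    have hnext : Measurable fun x => next fun i => (c (f i x), greedyLayer f c n (f i x)) :=
      (measurable_of_countable next).comp
        (measurable_pi_lambda _ fun i => (hc.comp (hf i)).prodMk (ih.comp (hf i)))
    exact Measurable.ite (hc (measurableSet_singleton n)) hnext ih

theorem measurable_greedyColoring (hf : ∀ i, Measurable (f i)) (hc : Measurable c) :
    Measurable (greedyColoring f c) :=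
  (measurable_from_prod_countable_left (f := fun p : X × ℕ => greedyLayer f c (p.2 + 1) p.1)
    fun n => measurable_greedyLayer hf hc (n + 1)).comp (measurable_id.prodMk hc)

end Greedy

theorem exists_measurable_fin_coloring [Fintype ι] [MeasurableSpace X]
    (hf : ∀ i, Measurable (f i)) (hsymm : ∀ i, ∃ j, ∀ x, f j (f i x) = x) {e : X → ℝ}
    (he : Measurable e) (he_inj : Function.Injective e) :
    ∃ col : X → Fin (Fintype.card ι + 1), Measurable col ∧ IsProperColoring f col := by
  obtain ⟨c, hc, hproper⟩ := exists_measurable_nat_coloring hf he he_inj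
  refine ⟨fun x => ⟨greedyColoring f c x, Nat.lt_succ_of_le (greedyColoring_le_card x)⟩,
    measurable_to_countable' fun j => ?_, fun i x hx heq => ?_⟩
  · convert measurable_greedyColoring hf hc (measurableSet_singleton (j : ℕ)) using 1
    ext x
    simp [Fin.ext_iff]
  · exact hproper.greedyColoring hsymm i x hx (congrArg Fin.val heq)

end Coloring

theorem stmt2_general {G X : Type*} [Group G] [MulAction G X]
    [mX : MeasurableSpace X] [StandardBorelSpace X]
    (μ : Measure X) (hpmp : IsPmp G μ)
    (T : Finset G) :
    ∃ (k : ℕ) (β : Fin k → Set X), IsCtblPart β ∧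
      ∀ (x : X) (i : Fin k), ∀ t₁ ∈ T, ∀ t₂ ∈ T,
        t₁ • x ∈ β i → t₂ • x ∈ β i → t₁ • x = t₂ • x := by
  obtain ⟨e, he⟩ := exists_measurableEmbedding_real X
  let f (p : T × T) (x : X) : X := (p.1 : G) • (p.2 : G)⁻¹ • x
  have hf : ∀ p, Measurable (f p) := fun p => (hpmp _).measurable.comp (hpmp _).measurable
  have hsymm : ∀ p, ∃ q, ∀ x, f q (f p x) = x := fun p => ⟨p.swap, fun x => by simp [f]⟩
  obtain ⟨col, hcol, hproper⟩ := exists_measurable_fin_coloring hf hsymm he.measurable he.injective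
  refine ⟨_, fun j => col ⁻¹' {j}, isCtblPart_preimage_singleton hcol, ?_⟩
  intro x j t₁ h₁ t₂ h₂ hx₁ hx₂
  have hmove : f (⟨t₁, h₁⟩, ⟨t₂, h₂⟩) (t₂ • x) = t₁ • x := by simp [f]
  by_contra hne
  exact hproper (⟨t₁, h₁⟩, ⟨t₂, h₂⟩) (t₂ • x) (hmove ▸ hne) (hmove ▸ hx₁.trans hx₂.symm)

theorem stmt2 {G X : Type*} [Group G] [Countable G] [MulAction G X]
    [mX : MeasurableSpace X] [StandardBorelSpace X]
    (μ : Measure X) [IsProbabilityMeasure μ] (hpmp : IsPmp G μ)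
    (T : Finset G) :
    ∃ (k : ℕ) (β : Fin k → Set X), IsCtblPart β ∧
      ∀ (x : X) (i : Fin k), ∀ t₁ ∈ T, ∀ t₂ ∈ T,
        t₁ • x ∈ β i → t₂ • x ∈ β i → t₁ • x = t₂ • x :=
  stmt2_general (mX := mX) μ hpmp T
end

section
/- Let (X, μ) be a standard probability space, let Σ ⊆ B(X) be a sub-σ-algebra with associated factor map f : (X, μ) → (Y, ν) and disintegration μ = ∫_Y μ_y dν(y). If F ⊆ B(X) is a countably generated σ-algebra, then for every countable measurable partition α one has H(α | F ∨ Σ) = ∫_Y H_{μ_y}(α | F) dν(y). -/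
open MeasureTheory Set
open scoped ENNReal NNReal

/-! For a cell `A` of `α` write `h = μ[1_A | F ⊔ Σ]`. For `t ∈ F` and measurable `u ⊆ Y` the
set `t ∩ f⁻¹ u` lies in `F ⊔ Σ`, so `∫_{t ∩ f⁻¹ u} h dμ = μ (A ∩ t ∩ f⁻¹ u)`; disintegrating
both sides over `u` gives `∫_t h dμ_y = μ_y (A ∩ t)` for `ν`-a.e. `y`, and since `F` is countably
generated one null set of `y` serves all `t ∈ F` at once (π-λ). On the fibre `f⁻¹ {y}`, which
carries `μ_y`, the σ-algebra `Σ` is trivial, so there `h` agrees with an `F`-measurable function.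
Hence `h` is a version of `μ_y[1_A | F]` for a.e. `y`, and integrating the entropy density against
`μ = ∫ μ_y dν` gives the formula. -/

open ProbabilityTheory

section
variable {X : Type*}

theorem countable_generatePiSystem {S : Set (Set X)} (hS : S.Countable) :
    (generatePiSystem S).Countable := by
  refine ((countable_ofPred_finite_subset hS).image sInter).mono fun s hs => ?_
  induction hs with
  | base h => exact ⟨{_}, ⟨finite_singleton _, singleton_subset_iff.2 h⟩, sInter_singleton _⟩
  | inter _ _ _ ih_s ih_t =>
    obtain ⟨t₁, ⟨ht₁, hs₁⟩, rfl⟩ := ih_s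
    obtain ⟨t₂, ⟨ht₂, hs₂⟩, rfl⟩ := ih_t
    exact ⟨t₁ ∪ t₂, ⟨ht₁.union ht₂, union_subset hs₁ hs₂⟩, sInter_union _ _⟩

theorem setLIntegral_ofReal_condExp_indicator {m m₀ : MeasurableSpace X} {μ : Measure[m₀] X}
    [IsFiniteMeasure μ] (hm : m ≤ m₀) {s t : Set X} (hs : MeasurableSet[m₀] s)
    (ht : MeasurableSet[m] t) :
    ∫⁻ x in t, ENNReal.ofReal (μ[s.indicator (fun _ => (1 : ℝ)) | m] x) ∂μ = μ (s ∩ t) := by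
  have hint : Integrable (s.indicator (fun _ => (1 : ℝ))) μ := (integrable_const 1).indicator hs
  have hnonneg : 0 ≤ᵐ[μ.restrict t] μ[s.indicator (fun _ => (1 : ℝ)) | m] :=
    ae_restrict_of_ae (condExp_nonneg (.of_forall fun x => indicator_nonneg (by simp) x))
  rw [← ofReal_integral_eq_lintegral_ofReal integrable_condExp.integrableOn hnonneg,
    setIntegral_condExp hm hint ht, setIntegral_indicator hs, setIntegral_const, smul_eq_mul,
    mul_one, measureReal_def, ENNReal.ofReal_toReal (measure_ne_top _ _), inter_comm]

theorem Measurable.exists_measurable_eqOn_fiber {Y β : Type*} [mY : MeasurableSpace Y]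
    [MeasurableSpace β] [StandardBorelSpace β] [Nonempty β] {m : MeasurableSpace X} {f : X → Y}
    {H : X → β} (hH : Measurable[m ⊔ mY.comap f] H) (y : Y) :
    ∃ H' : X → β, Measurable[m] H' ∧ EqOn H H' (f ⁻¹' {y}) := by
  have hfy : f ∘ ((↑) : f ⁻¹' {y} → X) = fun _ => y := funext fun x => x.2
  have hcomap : (m ⊔ mY.comap f).comap ((↑) : f ⁻¹' {y} → X) = m.comap (↑) := by
    rw [MeasurableSpace.comap_sup, MeasurableSpace.comap_comp, hfy, MeasurableSpace.comap_const,
      sup_bot_eq]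
  have hHy : Measurable[m.comap (↑)] (H ∘ ((↑) : f ⁻¹' {y} → X)) := by
    rw [← hcomap]; exact hH.comp (comap_measurable _)
  obtain ⟨H', hH', hHH'⟩ := hHy.exists_eq_measurable_comp
  exact ⟨H', hH', fun x hx => congrFun hHH' ⟨x, hx⟩⟩
end

section Disintegration
variable {X Y : Type*} {F mX : MeasurableSpace X} {mY : MeasurableSpace Y} {ν : Measure Y}
  {κ : Kernel Y X} {f : X → Y}

theorem setLIntegral_inter_preimage_comp (hf : Measurable f)
    (hfib : ∀ᵐ y ∂ν, ∀ᵐ x ∂κ y, f x = y) {g : X → ℝ≥0∞} (hg : Measurable g) {s : Set X}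
    (hs : MeasurableSet s) {t : Set Y} (ht : MeasurableSet t) :
    ∫⁻ x in s ∩ f ⁻¹' t, g x ∂(κ ∘ₘ ν) = ∫⁻ y in t, ∫⁻ x in s, g x ∂κ y ∂ν := by
  rw [← lintegral_indicator (hs.inter (hf ht)),
    Measure.lintegral_bind κ.aemeasurable (hg.indicator (hs.inter (hf ht))).aemeasurable,
    ← lintegral_indicator ht]
  refine lintegral_congr_ae ?_
  filter_upwards [hfib] with y hy
  calc ∫⁻ x, (s ∩ f ⁻¹' t).indicator g x ∂κ y
      = ∫⁻ x, t.indicator (fun _ => s.indicator g x) y ∂κ y := by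
        refine lintegral_congr_ae ?_
        filter_upwards [hy] with x rfl
        rw [inter_comm, ← indicator_indicator]
        by_cases hx : f x ∈ t <;> simp [hx]
    _ = t.indicator (fun y => ∫⁻ x in s, g x ∂κ y) y := by
        by_cases hy : y ∈ t <;> simp [hy, lintegral_indicator hs]

theorem ae_setLIntegral_eq_of_setLIntegral_inter_preimage_eq [SigmaFinite ν]
    [IsSFiniteKernel κ] (hf : Measurable f) (hfib : ∀ᵐ y ∂ν, ∀ᵐ x ∂κ y, f x = y)
    {g₁ g₂ : X → ℝ≥0∞} (hg₁ : Measurable g₁) (hg₂ : Measurable g₂) {s : Set X}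
    (hs : MeasurableSet s)
    (h : ∀ t, MeasurableSet t →
      ∫⁻ x in s ∩ f ⁻¹' t, g₁ x ∂(κ ∘ₘ ν) = ∫⁻ x in s ∩ f ⁻¹' t, g₂ x ∂(κ ∘ₘ ν)) :
    ∀ᵐ y ∂ν, ∫⁻ x in s, g₁ x ∂κ y = ∫⁻ x in s, g₂ x ∂κ y :=
  ae_eq_of_forall_setLIntegral_eq_of_sigmaFinite (hg₁.setLIntegral_kernel hs)
    (hg₂.setLIntegral_kernel hs) fun t ht _ => by
      rw [← setLIntegral_inter_preimage_comp hf hfib hg₁ hs ht,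
        ← setLIntegral_inter_preimage_comp hf hfib hg₂ hs ht, h t ht]

theorem ae_forall_measurableSet_eq_of_countablyGenerated
    [@MeasurableSpace.CountablyGenerated X F] (hF : F ≤ mX) {ρ₁ ρ₂ : Y → Measure X}
    [∀ y, IsFiniteMeasure (ρ₁ y)] (h : ∀ t, MeasurableSet[F] t → ∀ᵐ y ∂ν, ρ₁ y t = ρ₂ y t) :
    ∀ᵐ y ∂ν, ∀ t, MeasurableSet[F] t → ρ₁ y t = ρ₂ y t := by
  obtain ⟨b, hbc, rfl⟩ := ‹@MeasurableSpace.CountablyGenerated X F›.isCountablyGenerated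
  have hgen : MeasurableSpace.generateFrom b = .generateFrom (generatePiSystem b) :=
    generateFrom_generatePiSystem_eq.symm
  have hC : ∀ t ∈ insert univ (generatePiSystem b), MeasurableSet[.generateFrom b] t := by
    rintro t (rfl | ht)
    · exact MeasurableSet.univ
    · exact hgen ▸ MeasurableSpace.measurableSet_generateFrom ht
  have hae : ∀ᵐ y ∂ν, ∀ t ∈ insert univ (generatePiSystem b), ρ₁ y t = ρ₂ y t :=
    (ae_ball_iff ((countable_generatePiSystem hbc).insert univ)).2 fun t ht => h t (hC t ht)
  filter_upwards [hae] with y hy t ht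
  exact ext_on_measurableSpace_of_generate_finite mX _ (fun t ht => hy t (mem_insert_of_mem _ ht))
    hF hgen (isPiSystem_generatePiSystem b) (hy univ (mem_insert _ _)) ht

theorem ae_setLIntegral_ofReal_condExp_sup_comap [IsFiniteMeasure ν] [IsFiniteKernel κ]
    (hF : F ≤ mX) (hf : Measurable f) (hfib : ∀ᵐ y ∂ν, ∀ᵐ x ∂κ y, f x = y) {s t : Set X}
    (hs : MeasurableSet s) (ht : MeasurableSet[F] t) :
    ∀ᵐ y ∂ν, ∫⁻ x in t, ENNReal.ofReal
      ((κ ∘ₘ ν)[s.indicator (fun _ => (1 : ℝ)) | F ⊔ mY.comap f] x) ∂κ y = κ y (s ∩ t) := by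
  have hG : F ⊔ mY.comap f ≤ mX := sup_le hF hf.comap_le
  have hh : Measurable ((κ ∘ₘ ν)[s.indicator (fun _ => (1 : ℝ)) | F ⊔ mY.comap f]) :=
    (stronglyMeasurable_condExp.mono hG).measurable
  have hind : Measurable (s.indicator (1 : X → ℝ≥0∞)) := measurable_const.indicator hs
  have hcondExp : ∀ u, MeasurableSet u →
      ∫⁻ x in t ∩ f ⁻¹' u, ENNReal.ofReal
        ((κ ∘ₘ ν)[s.indicator (fun _ => (1 : ℝ)) | F ⊔ mY.comap f] x) ∂(κ ∘ₘ ν) =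
      ∫⁻ x in t ∩ f ⁻¹' u, s.indicator 1 x ∂(κ ∘ₘ ν) := fun u hu => by
    rw [setLIntegral_ofReal_condExp_indicator hG hs
      ((le_sup_left (b := mY.comap f) t ht).inter (le_sup_right (a := F) _ ⟨u, hu, rfl⟩)),
      lintegral_indicator_one hs, Measure.restrict_apply hs]
  filter_upwards [ae_setLIntegral_eq_of_setLIntegral_inter_preimage_eq hf hfib
    hh.ennreal_ofReal hind (hF t ht) hcondExp] with y hy
  rw [hy, lintegral_indicator_one hs, Measure.restrict_apply hs, inter_comm]

theorem ae_condExp_sup_comap_ae_eq_condExp [IsFiniteMeasure ν] [IsFiniteKernel κ]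
    [@MeasurableSpace.CountablyGenerated X F] (hF : F ≤ mX) (hf : Measurable f)
    (hfib : ∀ᵐ y ∂ν, ∀ᵐ x ∂κ y, f x = y) {s : Set X} (hs : MeasurableSet s) :
    ∀ᵐ y ∂ν, (κ ∘ₘ ν)[s.indicator (fun _ => (1 : ℝ)) | F ⊔ mY.comap f]
      =ᵐ[κ y] (κ y)[s.indicator (fun _ => (1 : ℝ)) | F] := by
  set h := (κ ∘ₘ ν)[s.indicator (fun _ => (1 : ℝ)) | F ⊔ mY.comap f]
  have hhG : Measurable[F ⊔ mY.comap f] h := stronglyMeasurable_condExp.measurable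
  have hh : Measurable h := hhG.mono (sup_le hF hf.comap_le) le_rfl
  have hbound : ∀ᵐ y ∂ν, ∀ᵐ x ∂κ y, 0 ≤ h x ∧ |h x| ≤ 1 := by
    refine Measure.ae_ae_of_ae_comp ((condExp_nonneg (.of_forall fun x => ?_)).and
      (ae_bdd_abs_condExp_of_ae_bdd_abs (R := (1 : ℝ)) (.of_forall fun x => ?_)))
    · exact indicator_nonneg (fun _ _ => zero_le_one) x
    · by_cases hx : x ∈ s <;> simp [hx]
  have hfiber : ∀ t, MeasurableSet[F] t →
      ∀ᵐ y ∂ν, (κ y).restrict s t = (κ y).withDensity (fun x => ENNReal.ofReal (h x)) t :=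
    fun t ht => (ae_setLIntegral_ofReal_condExp_sup_comap hF hf hfib hs ht).mono fun y hy => by
      rw [withDensity_apply _ (hF t ht), hy, Measure.restrict_apply (hF t ht), inter_comm]
  filter_upwards [ae_forall_measurableSet_eq_of_countablyGenerated hF hfiber, hfib, hbound]
    with y hy hyfib hybound
  obtain ⟨H, hH, hHh⟩ := hhG.exists_measurable_eqOn_fiber y
  have hint : Integrable h (κ y) := (integrable_const (1 : ℝ)).mono' hh.aestronglyMeasurable
    (hybound.mono fun x hx => hx.2)
  refine ae_eq_condExp_of_forall_setIntegral_eq hF ((integrable_const 1).indicator hs)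
    (fun t _ _ => hint.integrableOn) (fun t ht _ => ?_)
    ⟨H, hH.stronglyMeasurable, hyfib.mono fun x hx => hHh hx⟩
  rw [integral_eq_lintegral_of_nonneg_ae (ae_restrict_of_ae (hybound.mono fun x hx => hx.1))
      hh.aestronglyMeasurable.restrict, ← withDensity_apply _ (hF t ht), ← hy t ht,
    Measure.restrict_apply (hF t ht), setIntegral_indicator hs, setIntegral_const, smul_eq_mul,
    mul_one, measureReal_def, inter_comm]

end Disintegration

theorem stmt3_general {X Y : Type*} (F : MeasurableSpace X)
    [mX : MeasurableSpace X]
    [mY : MeasurableSpace Y] [StandardBorelSpace Y]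
    (μ : Measure X) [IsProbabilityMeasure μ]
    (f : X → Y) (hf : Measurable f)
    (ν : Measure Y)
    (μy : Y → Measure X)
    (hker : ∀ s : Set X, MeasurableSet s → Measurable fun y => μy y s)
    (hprob : ∀ y : Y, IsProbabilityMeasure (μy y))
    (hdis : ∀ s : Set X, MeasurableSet s → μ s = ∫⁻ y, μy y s ∂ν)
    (hfib : ∀ᵐ y ∂ν, μy y (f ⁻¹' {y}) = 1)
    (hFle : F ≤ mX) (hFcg : @MeasurableSpace.CountablyGenerated X F)
    (α : ℕ → Set X) (hα : IsCtblPart α) :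
    condEnt μ (F ⊔ MeasurableSpace.comap f mY) α = ∫⁻ y, condEnt (μy y) F α ∂ν := by
  obtain ⟨hαm, -, -⟩ := hα
  let κ : Kernel Y X := ⟨μy, Measure.measurable_of_measurable_coe μy hker⟩
  have : IsMarkovKernel κ := ⟨hprob⟩
  have hμ : μ = κ ∘ₘ ν := Measure.ext fun s hs => by
    rw [hdis s hs, Measure.bind_apply hs κ.aemeasurable]; rfl
  have : IsProbabilityMeasure ν := ⟨by rw [← Measure.comp_apply_univ (κ := κ), ← hμ, measure_univ]⟩
  have hfib' : ∀ᵐ y ∂ν, ∀ᵐ x ∂κ y, f x = y := hfib.mono fun y hy =>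
    (ae_iff_measure_eq (hf (measurableSet_singleton y)).nullMeasurableSet).2 (by
      rw [measure_univ, ← hy]; rfl)
  have : @MeasurableSpace.CountablyGenerated X F := hFcg
  have hcond := ae_all_iff.2 fun n => ae_condExp_sup_comap_ae_eq_condExp hFle hf hfib' (hαm n)
  have hG : F ⊔ mY.comap f ≤ mX := sup_le hFle hf.comap_le
  have hmeas : Measurable fun x => ∑' n, ENNReal.ofReal (Real.negMulLog
      ((κ ∘ₘ ν)[(α n).indicator (fun _ => (1 : ℝ)) | F ⊔ mY.comap f] x)) :=
    Measurable.tsum fun n => (Real.continuous_negMulLog.measurable.comp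
      (stronglyMeasurable_condExp.mono hG).measurable).ennreal_ofReal
  rw [hμ, condEnt, Measure.lintegral_bind κ.aemeasurable hmeas.aemeasurable]
  refine lintegral_congr_ae (hcond.mono fun y hy => lintegral_congr_ae ?_)
  filter_upwards [ae_all_iff.2 hy] with x hx
  exact tsum_congr fun n => by rw [hx n]; rfl

theorem stmt3 {X Y : Type*} (F : MeasurableSpace X)
    [mX : MeasurableSpace X] [StandardBorelSpace X]
    [mY : MeasurableSpace Y] [StandardBorelSpace Y]
    (μ : Measure X) [IsProbabilityMeasure μ]
    (f : X → Y) (hf : Measurable f)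
    (ν : Measure Y) (hν : ν = Measure.map f μ)
    (μy : Y → Measure X)
    (hker : ∀ s : Set X, MeasurableSet s → Measurable fun y => μy y s)
    (hprob : ∀ y : Y, IsProbabilityMeasure (μy y))
    (hdis : ∀ s : Set X, MeasurableSet s → μ s = ∫⁻ y, μy y s ∂ν)
    (hfib : ∀ᵐ y ∂ν, μy y (f ⁻¹' {y}) = 1)
    (hFle : F ≤ mX) (hFcg : @MeasurableSpace.CountablyGenerated X F)
    (α : ℕ → Set X) (hα : IsCtblPart α) :
    condEnt μ (F ⊔ MeasurableSpace.comap f mY) α = ∫⁻ y, condEnt (μy y) F α ∂ν :=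
  stmt3_general F (mX := mX) (mY := mY) μ f hf ν μy hker hprob hdis hfib hFle hFcg α hα
end

section
/- Let G act measure-preservingly on a standard probability space (X, μ) and let Γ ≤ G be a finite-index subgroup. If G ↷ (X, μ) factors onto the finite action G ↷ (G/Δ, u_{G/Δ}), where Δ is the maximal normal subgroup of G contained in Γ, then there is a Γ-invariant Borel partition {X_{Γg} : Γg ∈ Γ\G} of X such that each X_{Γg} meets μ-almost-every G-orbit, μ(X_{Γg}) = [G : Γ]^{-1}, and I_Γ = σ({X_{Γg}}) ∨ I_G modulo μ-null sets. -/
open MeasureTheory Set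
open scoped ENNReal NNReal

/-!
Write `Δ` for the normal core of `Γ`. As `Δ` is normal, `gΔ ↦ Γg` is a well-defined map
`G ⧸ Δ → Γ \ G`, and `g • d` has the same image as `d` exactly when `g ∈ Γ`. The pieces are the
preimages of its fibres under the equivariant factor map. Hence they are `Γ`-invariant, `G` moves
every point into every piece, and `g` can move a point of a piece into the same piece only if
`g ∈ Γ`. Each fibre is a `Γ`-orbit in `G ⧸ Δ` with stabiliser `Δ`, so it has `[Γ : Δ]` points and
its preimage has measure `[Γ : Δ] / [G : Δ] = 1 / [G : Γ]`. Finally, a `Γ`-invariant set `s` is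
exactly `⋃ c, X_c ∩ G • (s ∩ X_c)` with `G • (s ∩ X_c)` a `G`-invariant set, so `I_Γ` and
`σ(X_c) ∨ I_G` coincide on the nose.
-/

namespace QuotientGroup

variable {G : Type*} [Group G] {N Γ : Subgroup G} [N.Normal]

/-- `gN ↦ Γg`. -/
def toRightCosetsOfLE (hN : N ≤ Γ) : G ⧸ N → Quotient (rightRel Γ) :=
  Quotient.map' id fun a b h => by
    rw [leftRel_apply] at h
    rw [rightRel_apply]
    simpa using hN (‹N.Normal›.conj_mem _ h a)

variable (hN : N ≤ Γ)

@[simp]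
theorem toRightCosetsOfLE_mk (g : G) : toRightCosetsOfLE hN (g : G ⧸ N) = Quotient.mk'' g :=
  rfl

theorem toRightCosetsOfLE_smul_eq_iff {g : G} {d : G ⧸ N} :
    toRightCosetsOfLE hN (g • d) = toRightCosetsOfLE hN d ↔ g ∈ Γ := by
  induction d using QuotientGroup.induction_on with
  | H h =>
    rw [MulAction.Quotient.smul_mk, toRightCosetsOfLE_mk, toRightCosetsOfLE_mk, Quotient.eq'',
      rightRel_apply]
    simp

theorem exists_toRightCosetsOfLE_smul_eq (d : G ⧸ N) (c : Quotient (rightRel Γ)) :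
    ∃ g : G, toRightCosetsOfLE hN (g • d) = c := by
  induction d using QuotientGroup.induction_on with
  | H h =>
    induction c using Quotient.inductionOn' with
    | h k => exact ⟨k * h⁻¹, by simp⟩

theorem preimage_toRightCosetsOfLE_eq_orbit (d : G ⧸ N) :
    toRightCosetsOfLE hN ⁻¹' {toRightCosetsOfLE hN d} = MulAction.orbit Γ d := by
  ext d'
  obtain ⟨g, rfl⟩ := MulAction.exists_smul_eq G d d'
  constructor
  · intro hg
    exact ⟨⟨g, (toRightCosetsOfLE_smul_eq_iff hN).1 hg⟩, rfl⟩
  · rintro ⟨γ, hγ⟩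
    rw [mem_preimage, mem_singleton_iff, ← hγ]
    exact (toRightCosetsOfLE_smul_eq_iff hN).2 γ.2

theorem stabilizer_subgroup_eq_subgroupOf (d : G ⧸ N) :
    MulAction.stabilizer Γ d = N.subgroupOf Γ := by
  induction d using QuotientGroup.induction_on with
  | H h =>
    ext γ
    rw [MulAction.mem_stabilizer_iff]
    change (γ : G) • (h : G ⧸ N) = h ↔ _
    rw [MulAction.Quotient.smul_mk, QuotientGroup.eq, Subgroup.mem_subgroupOf, smul_eq_mul,
      mul_inv_rev, ‹N.Normal›.mem_comm_iff]
    simp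

theorem ncard_preimage_toRightCosetsOfLE (c : Quotient (rightRel Γ)) :
    (toRightCosetsOfLE hN ⁻¹' {c}).ncard = N.relIndex Γ := by
  obtain ⟨g, rfl⟩ := exists_toRightCosetsOfLE_smul_eq hN (1 : G ⧸ N) c
  rw [preimage_toRightCosetsOfLE_eq_orbit, ← MulAction.index_stabilizer,
    stabilizer_subgroup_eq_subgroupOf]
  rfl

end QuotientGroup

section Measure

theorem LeModNull.of_le {X : Type*} {m₁ m₂ : MeasurableSpace X} [MeasurableSpace X]
    {μ : Measure X} (h : m₁ ≤ m₂) : LeModNull μ m₁ m₂ :=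
  fun s hs => ⟨s, h s hs, by rw [symmDiff_self]; exact measure_empty⟩

variable {X : Type*} [MeasurableSpace X] {μ : Measure X}

theorem isCtblPart_fibers {ι : Type*} (p : X → ι) (hp : ∀ i, MeasurableSet (p ⁻¹' {i})) :
    IsCtblPart fun i => p ⁻¹' {i} :=
  ⟨hp, pairwise_disjoint_fiber p, iUnion_eq_univ_iff.2 fun x => ⟨p x, rfl⟩⟩

theorem measure_preimage_eq_encard_mul {α : Type*} [Countable α] {p : X → α}
    (hp : ∀ a, MeasurableSet (p ⁻¹' {a})) {r : ℝ≥0∞} (hr : ∀ a, μ (p ⁻¹' {a}) = r)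
    (s : Set α) : μ (p ⁻¹' s) = s.encard * r := by
  rw [← tsum_measure_preimage_singleton s.to_countable fun a _ => hp a,
    tsum_congr fun a : s => hr a, ENNReal.tsum_const]
  rfl

theorem QuotientGroup.measure_preimage_toRightCosetsOfLE {G : Type*} [Group G]
    {N Γ : Subgroup G} [N.Normal] [N.FiniteIndex] (hN : N ≤ Γ) {f : X → G ⧸ N}
    (hfm : ∀ d, MeasurableSet (f ⁻¹' {d})) (hfu : ∀ d, μ (f ⁻¹' {d}) = (N.index : ℝ≥0∞)⁻¹)
    (c : Quotient (QuotientGroup.rightRel Γ)) :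
    μ (f ⁻¹' (toRightCosetsOfLE hN ⁻¹' {c})) = (Γ.index : ℝ≥0∞)⁻¹ := by
  have hr : (N.relIndex Γ : ℝ≥0∞) ≠ 0 := by
    have := Subgroup.isFiniteRelIndex_of_finiteIndex (H := N) (K := Γ)
    exact_mod_cast N.relIndex_ne_zero
  rw [measure_preimage_eq_encard_mul hfm hfu, ← (toFinite _).cast_ncard_eq,
    ncard_preimage_toRightCosetsOfLE, ENat.toENNReal_coe, ← N.relIndex_mul_index hN,
    Nat.cast_mul, ENNReal.mul_inv (.inr (by simp)) (.inl (by simp)), ← mul_assoc,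
    ENNReal.mul_inv_cancel hr (by simp), one_mul]

end Measure

section InvariantSigma

variable {G X : Type*} [Group G] [MulAction G X] [MeasurableSpace X]

theorem measurableSet_invSigma_iff {s : Set X} :
    MeasurableSet[invSigma G X] s ↔ MeasurableSet s ∧ ∀ g : G, (g • ·) ⁻¹' s = s := by
  refine ⟨fun hs => ?_, fun hs => MeasurableSpace.measurableSet_generateFrom hs⟩
  induction s, hs using MeasurableSpace.generateFrom_induction with
  | hC t ht => exact ht
  | empty => simp
  | compl t _ ht => exact ⟨ht.1.compl, fun g => by rw [preimage_compl, ht.2 g]⟩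
  | iUnion t _ ht =>
    exact ⟨.iUnion fun i => (ht i).1, fun g => by simp only [preimage_iUnion, (ht _).2 g]⟩

theorem invSigma_le_invSigma_subgroup (H : Subgroup G) : invSigma G X ≤ invSigma H X :=
  fun _ hs =>
    let ⟨hsm, hsinv⟩ := measurableSet_invSigma_iff.1 hs
    MeasurableSpace.measurableSet_generateFrom ⟨hsm, fun h => hsinv h⟩

theorem partSigma_le_invSigma {ι : Type*} {P : ι → Set X} (hP : ∀ i, MeasurableSet (P i))
    (hinv : ∀ i (g : G), (g • ·) ⁻¹' P i = P i) : partSigma P ≤ invSigma G X :=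
  MeasurableSpace.generateFrom_le fun _ ⟨i, hi⟩ =>
    hi ▸ MeasurableSpace.measurableSet_generateFrom ⟨hP i, hinv i⟩

theorem measurableSet_invSigma_setOf_exists_smul_mem [Countable G]
    (hmeas : ∀ g : G, Measurable (g • · : X → X)) {A : Set X} (hA : MeasurableSet A) :
    MeasurableSet[invSigma G X] {x | ∃ g : G, g • x ∈ A} := by
  refine measurableSet_invSigma_iff.2 ⟨?_, fun g' => ?_⟩
  · rw [ofPred_exists]
    exact .iUnion fun g => hmeas g hA
  · ext x
    refine ⟨fun ⟨g, hg⟩ => ⟨g * g', by rwa [mul_smul]⟩, fun ⟨g, hg⟩ => ⟨g * g'⁻¹, ?_⟩⟩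
    simpa [mul_smul] using hg

/-- An `H`-invariant `s` equals `⋃ i, G • (s ∩ P i) ∩ P i`: whatever brings a point of `P i`
into `s ∩ P i` lies in `H`. -/
theorem invSigma_subgroup_le_partSigma_sup_invSigma [Countable G] {ι : Type*} [Countable ι]
    (hmeas : ∀ g : G, Measurable (g • · : X → X)) {H : Subgroup G} {P : ι → Set X}
    (hP : ∀ i, MeasurableSet (P i)) (hcover : ⋃ i, P i = univ)
    (hrigid : ∀ i x (g : G), x ∈ P i → g • x ∈ P i → g ∈ H) :
    invSigma H X ≤ partSigma P ⊔ invSigma G X := by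
  intro s hs
  obtain ⟨hsm, hsinv⟩ := measurableSet_invSigma_iff.1 hs
  have hs_eq : s = ⋃ i, {x | ∃ g : G, g • x ∈ s ∩ P i} ∩ P i := by
    ext x
    refine ⟨fun hx => ?_, fun hx => ?_⟩
    · obtain ⟨i, hi⟩ := mem_iUnion.1 (hcover ▸ mem_univ x)
      exact mem_iUnion.2 ⟨i, ⟨1, by simpa using ⟨hx, hi⟩⟩, hi⟩
    · obtain ⟨i, ⟨g, hgs, hgi⟩, hi⟩ := mem_iUnion.1 hx
      exact (hsinv ⟨g, hrigid i x g hi hgi⟩).subset hgs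
  rw [hs_eq]
  refine .iUnion fun i => .inter ?_ ?_
  · exact le_sup_right (a := partSigma P) _
      (measurableSet_invSigma_setOf_exists_smul_mem hmeas (hsm.inter (hP i)))
  · exact le_sup_left (b := invSigma G X) _ (MeasurableSpace.measurableSet_generateFrom ⟨i, rfl⟩)

end InvariantSigma

theorem stmt5_general {G X : Type*} [Group G] [Countable G] [MulAction G X]
    [mX : MeasurableSpace X]
    (μ : Measure X) (hpmp : IsPmp G μ)
    (Γ : Subgroup G) (hΓ : Γ.FiniteIndex)
    (f : X → G ⧸ Γ.normalCore)
    (hfm : ∀ c : G ⧸ Γ.normalCore, MeasurableSet (f ⁻¹' {c}))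
    (hfe : ∀ (g : G) (x : X), f (g • x) = g • f x)
    (hfu : ∀ c : G ⧸ Γ.normalCore, μ (f ⁻¹' {c}) = ((Γ.normalCore.index : ℝ≥0∞))⁻¹) :
    ∃ P : Quotient (QuotientGroup.rightRel Γ) → Set X,
      IsCtblPart P ∧
      (∀ c, ∀ γ : Γ, ((γ : G) • ·) ⁻¹' (P c) = P c) ∧
      (∀ c, μ {x : X | ¬ ∃ g : G, g • x ∈ P c} = 0) ∧
      (∀ c, μ (P c) = ((Γ.index : ℝ≥0∞))⁻¹) ∧
      LeModNull μ (invSigma Γ X) (partSigma P ⊔ invSigma G X) ∧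
      LeModNull μ (partSigma P ⊔ invSigma G X) (invSigma Γ X) := by
  have := hΓ
  set π := QuotientGroup.toRightCosetsOfLE Γ.normalCore_le
  have hπf : ∀ (g : G) x, π (f (g • x)) = π (f x) ↔ g ∈ Γ := fun g x => by
    rw [hfe, QuotientGroup.toRightCosetsOfLE_smul_eq_iff]
  have hpart := isCtblPart_fibers (π ∘ f) fun c => by
    rw [preimage_comp, ← biUnion_preimage_singleton]
    exact .biUnion (to_countable _) fun d _ => hfm d
  have hinv : ∀ c (γ : Γ), ((γ : G) • ·) ⁻¹' (f ⁻¹' (π ⁻¹' {c})) = f ⁻¹' (π ⁻¹' {c}) :=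
    fun c γ => ext fun x => by
      change π (f ((γ : G) • x)) = c ↔ π (f x) = c
      rw [(hπf γ x).2 γ.2]
  refine ⟨fun c => f ⁻¹' (π ⁻¹' {c}), hpart, hinv, fun c => ?_,
    QuotientGroup.measure_preimage_toRightCosetsOfLE _ hfm hfu, LeModNull.of_le ?_,
    LeModNull.of_le (sup_le (partSigma_le_invSigma hpart.1 hinv) (invSigma_le_invSigma_subgroup Γ))⟩
  · have hmeets : ∀ x, ∃ g : G, π (f (g • x)) = c := fun x => by
      simpa only [hfe] using QuotientGroup.exists_toRightCosetsOfLE_smul_eq _ (f x) c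
    simp [hmeets]
  · exact invSigma_subgroup_le_partSigma_sup_invSigma (fun g => (hpmp g).measurable) hpart.1
      hpart.2.2 fun c x g hx hgx => (hπf g x).1 (hgx.trans hx.symm)

theorem stmt5 {G X : Type*} [Group G] [Countable G] [MulAction G X]
    [mX : MeasurableSpace X] [StandardBorelSpace X]
    (μ : Measure X) [IsProbabilityMeasure μ] (hpmp : IsPmp G μ)
    (Γ : Subgroup G) (hΓ : Γ.FiniteIndex)
    (f : X → G ⧸ Γ.normalCore)
    (hfm : ∀ c : G ⧸ Γ.normalCore, MeasurableSet (f ⁻¹' {c}))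
    (hfe : ∀ (g : G) (x : X), f (g • x) = g • f x)
    (hfu : ∀ c : G ⧸ Γ.normalCore, μ (f ⁻¹' {c}) = ((Γ.normalCore.index : ℝ≥0∞))⁻¹) :
    ∃ P : Quotient (QuotientGroup.rightRel Γ) → Set X,
      IsCtblPart P ∧
      (∀ c, ∀ γ : Γ, ((γ : G) • ·) ⁻¹' (P c) = P c) ∧
      (∀ c, μ {x : X | ¬ ∃ g : G, g • x ∈ P c} = 0) ∧
      (∀ c, μ (P c) = ((Γ.index : ℝ≥0∞))⁻¹) ∧
      LeModNull μ (invSigma Γ X) (partSigma P ⊔ invSigma G X) ∧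
      LeModNull μ (partSigma P ⊔ invSigma G X) (invSigma Γ X) :=
  stmt5_general (mX := mX) μ hpmp Γ hΓ f hfm hfe hfu
end

section
/- Let G ↷ (X, μ) be a p.m.p. action and Γ ≤ G a finite-index subgroup. Suppose there is a Γ-invariant Borel partition {X_{Γg} : Γg ∈ Γ\G} of X such that each X_{Γg} meets almost-every G-orbit, μ(X_{Γg}) = [G : Γ]^{-1}, and I_Γ = {X_{Γg}} ∨ I_G. Then for almost-every G-ergodic component ν of μ, ν has precisely [G : Γ] many Γ-ergodic components. -/
open MeasureTheory Set
open scoped ENNReal NNReal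

/-
For a `Γ`-invariant set `s`, the number of left cosets `gΓ` with `x ∈ g • s` is a `G`-invariant
function of `x`, hence a.e. constant for an ergodic `ν`, and its integral is `[G : Γ] ν(s)`; so
`[G : Γ] ν(s)` is an integer. For `τ`-a.e. `ν` each piece `X_{Γg}` has positive measure, since it
meets `ν`-a.e. orbit. The `[G : Γ]` pieces have total measure `1`, so each has measure exactly
`[G : Γ]⁻¹`, and a `Γ`-invariant subset of a piece then has measure `0` or `[G : Γ]⁻¹`: the
pieces are the `Γ`-ergodic components of `ν`.
-/

open scoped Pointwise

theorem Fintype.eq_one_of_sum_eq_card {ι : Type*} [Fintype ι] {j : ι → ℕ}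
    (hsum : ∑ i, j i = Fintype.card ι) (hpos : ∀ i, j i ≠ 0) (i : ι) : j i = 1 := by
  by_contra hne
  have hlt : ∑ _k : ι, 1 < ∑ k, j k :=
    Finset.sum_lt_sum (fun k _ => Nat.one_le_iff_ne_zero.2 (hpos k))
      ⟨i, Finset.mem_univ i, by have := hpos i; omega⟩
  simp [hsum] at hlt

theorem ae_measure_eq_zero_of_eq_lintegral {X : Type*} [MeasurableSpace X] {μ : Measure X}
    {τ : Measure (Measure X)} (hdec : ∀ s : Set X, MeasurableSet s → μ s = ∫⁻ ν, ν s ∂τ)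
    {s : Set X} (hs : MeasurableSet s) (hμs : μ s = 0) : ∀ᵐ ν ∂τ, ν s = 0 := by
  rw [hdec s hs] at hμs
  exact (lintegral_eq_zero_iff (Measure.measurable_coe hs)).1 hμs

section Action

variable {G X : Type*} [Group G] [MulAction G X]

section CosetCount

variable {Γ : Subgroup G} {s : Set X}

theorem smul_set_eq_of_mk_eq (hs : ∀ γ : Γ, ((γ : G) • ·) ⁻¹' s = s) {a b : G}
    (hab : (a : G ⧸ Γ) = b) : a • s = b • s := by
  have hγ : (a⁻¹ * b) • s = s := by
    rw [← Set.preimage_smul_inv]; exact hs ⟨_, inv_mem (QuotientGroup.eq.1 hab)⟩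
  calc a • s = a • (a⁻¹ * b) • s := by rw [hγ]
    _ = b • s := by rw [smul_smul, mul_inv_cancel_left]

variable (Γ s) [Fintype (G ⧸ Γ)]

noncomputable def cosetCount (x : X) : ℕ :=
  ∑ q : G ⧸ Γ, (q.out • s).indicator 1 x

variable {Γ s}

theorem cosetCount_smul (hs : ∀ γ : Γ, ((γ : G) • ·) ⁻¹' s = s) (g : G) (x : X) :
    cosetCount Γ s (g • x) = cosetCount Γ s x := by
  refine (Fintype.sum_equiv (MulAction.toPerm g⁻¹) _ _ fun q => ?_)
  have hout : (q.out • s) = g • (g⁻¹ • q).out • s := by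
    rw [smul_smul, smul_set_eq_of_mk_eq hs]
    rw [← smul_eq_mul, MulAction.Quotient.mk_smul_out, smul_inv_smul, QuotientGroup.out_eq']
  rw [MulAction.toPerm_apply, hout]
  classical
  simp only [Set.indicator_apply, Set.smul_mem_smul_set_iff, Pi.one_apply]

end CosetCount

variable [MeasurableSpace X]

theorem IsPmp.measurableSet_smul_set {ν : Measure X} (hpmp : IsPmp G ν) (a : G) {s : Set X}
    (hs : MeasurableSet s) : MeasurableSet (a • s) := by
  rw [← Set.preimage_smul_inv]
  exact (hpmp a⁻¹).measurable hs

theorem IsPmp.measure_smul_set {ν : Measure X} (hpmp : IsPmp G ν) (a : G) {s : Set X}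
    (hs : MeasurableSet s) : ν (a • s) = ν s := by
  rw [← Set.preimage_smul_inv]
  exact (hpmp a⁻¹).measure_preimage hs.nullMeasurableSet

theorem measurableSet_setOf_not_exists_smul_mem [Countable G] {μ : Measure X} (hpmp : IsPmp G μ)
    {A : Set X} (hA : MeasurableSet A) : MeasurableSet {x : X | ¬ ∃ g : G, g • x ∈ A} := by
  rw [← Set.compl_ofPred, Set.ofPred_exists]
  exact (MeasurableSet.iUnion fun g => (hpmp g).measurable hA).compl

theorem measure_ne_zero_of_ae_exists_smul_mem [Countable G] {ν : Measure X} [NeZero ν]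
    (hpmp : IsPmp G ν) {A : Set X} (hA : MeasurableSet A)
    (hsat : ν {x : X | ¬ ∃ g : G, g • x ∈ A} = 0) : ν A ≠ 0 := by
  intro hA0
  have hsat' : ν {x : X | ∃ g : G, g • x ∈ A} = 0 := by
    rw [Set.ofPred_exists]
    refine measure_iUnion_null fun g => ?_
    change ν ((g • ·) ⁻¹' A) = 0
    rwa [(hpmp g).measure_preimage hA.nullMeasurableSet]
  apply NeZero.ne ν
  rw [← Measure.measure_univ_eq_zero, ← Set.union_compl_self {x : X | ∃ g : G, g • x ∈ A}]
  exact measure_union_null hsat' hsat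

theorem ErgAction.exists_ae_eq_const {ν : Measure X} [NeZero ν] (herg : ErgAction G ν)
    {f : X → ℕ} (hf : Measurable f) (hinv : ∀ (g : G) x, f (g • x) = f x) :
    ∃ j, ∀ᵐ x ∂ν, f x = j := by
  obtain ⟨j, hj⟩ : ∃ j, ν (f ⁻¹' {j}) ≠ 0 := by
    by_contra! hnull
    apply NeZero.ne ν
    rw [← Measure.measure_univ_eq_zero, ← Set.preimage_univ (f := f), ← Set.iUnion_of_singleton,
      Set.preimage_iUnion]
    exact measure_iUnion_null hnull
  refine ⟨j, ae_iff.2 ?_⟩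
  have := (herg _ (hf (measurableSet_singleton j)) fun g => by ext x; simp [hinv]).resolve_left hj
  simpa [Set.compl_def] using this

section CosetCount

variable {Γ : Subgroup G} {s : Set X} [Fintype (G ⧸ Γ)]

theorem measurable_cosetCount {ν : Measure X} (hpmp : IsPmp G ν) (hs : MeasurableSet s) :
    Measurable (cosetCount Γ s) :=
  Finset.measurable_sum _ fun _ _ => measurable_const.indicator (hpmp.measurableSet_smul_set _ hs)

theorem lintegral_cosetCount {ν : Measure X} (hpmp : IsPmp G ν) (hs : MeasurableSet s) :
    ∫⁻ x, (cosetCount Γ s x : ℝ≥0∞) ∂ν = Fintype.card (G ⧸ Γ) * ν s := by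
  have hcast : ∀ (t : Set X) (x : X), ((t.indicator 1 x : ℕ) : ℝ≥0∞) = t.indicator 1 x :=
    fun t x => by classical simp [Set.indicator_apply]
  calc ∫⁻ x, (cosetCount Γ s x : ℝ≥0∞) ∂ν
      = ∑ q : G ⧸ Γ, ∫⁻ x, (q.out • s).indicator 1 x ∂ν := by
        simp only [cosetCount, Nat.cast_sum, hcast]
        exact lintegral_finsetSum _ fun _ _ =>
          measurable_const.indicator (hpmp.measurableSet_smul_set _ hs)
    _ = Fintype.card (G ⧸ Γ) * ν s := by
        simp [lintegral_indicator_one (hpmp.measurableSet_smul_set _ hs), hpmp.measure_smul_set _ hs]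

end CosetCount

section Quantization

variable {Γ : Subgroup G} [Γ.FiniteIndex] {ν : Measure X} [IsProbabilityMeasure ν]

theorem ErgAction.exists_index_mul_measure_eq_natCast (hpmp : IsPmp G ν) (herg : ErgAction G ν)
    {s : Set X} (hs : MeasurableSet s) (hsinv : ∀ γ : Γ, ((γ : G) • ·) ⁻¹' s = s) :
    ∃ j : ℕ, (Γ.index : ℝ≥0∞) * ν s = j := by
  have := Fintype.ofFinite (G ⧸ Γ)
  obtain ⟨j, hj⟩ := herg.exists_ae_eq_const (measurable_cosetCount hpmp hs) (cosetCount_smul hsinv)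
  refine ⟨j, ?_⟩
  rw [Γ.index_eq_card, Nat.card_eq_fintype_card, ← lintegral_cosetCount hpmp hs,
    lintegral_congr_ae (hj.mono fun x hx => by rw [hx]), lintegral_const, measure_univ, mul_one]

theorem ErgAction.restrict_of_index_mul_measure_eq_one (hpmp : IsPmp G ν) (herg : ErgAction G ν)
    {A : Set X} (hA : MeasurableSet A) (hAinv : ∀ γ : Γ, ((γ : G) • ·) ⁻¹' A = A)
    (hA1 : (Γ.index : ℝ≥0∞) * ν A = 1) : ErgAction Γ (ν.restrict A) := by
  intro s hs hsinv
  have hidx : (Γ.index : ℝ≥0∞) ≠ 0 := Nat.cast_ne_zero.2 Γ.index_ne_zero_of_finite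
  rw [Measure.restrict_apply hs, Measure.restrict_apply hs.compl]
  obtain ⟨j, hj⟩ := herg.exists_index_mul_measure_eq_natCast hpmp (hs.inter hA) fun γ => by
    rw [Set.preimage_inter]
    exact congrArg₂ (· ∩ ·) (hsinv γ) (hAinv γ)
  have hj1 : (j : ℝ≥0∞) ≤ 1 := calc
    (j : ℝ≥0∞) = Γ.index * ν (s ∩ A) := hj.symm
    _ ≤ Γ.index * ν A := by gcongr; exact Set.inter_subset_right
    _ = 1 := hA1
  replace hj1 : j ≤ 1 := by exact_mod_cast hj1
  interval_cases j
  · left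
    simpa [hidx] using hj
  · right
    have hsA : ν (s ∩ A) = ν A :=
      (ENNReal.mul_right_inj hidx (ENNReal.natCast_ne_top _)).1 (by rw [hj, hA1, Nat.cast_one])
    have hsplit := measure_inter_add_sdiff (μ := ν) A hs
    rw [Set.inter_comm, hsA] at hsplit
    rw [← Set.sdiff_eq_compl_inter]
    exact (ENNReal.add_right_inj (measure_ne_top ν A)).1 (hsplit.trans (add_zero _).symm)

theorem ErgAction.hasNErgComponents_of_partition (hpmp : IsPmp G ν) (herg : ErgAction G ν)
    {ι : Type*} [Finite ι] (hι : Nat.card ι = Γ.index) {P : ι → Set X} (hP : IsCtblPart P)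
    (hPinv : ∀ i, ∀ γ : Γ, ((γ : G) • ·) ⁻¹' P i = P i) (hPpos : ∀ i, ν (P i) ≠ 0) :
    HasNErgComponents Γ ν Γ.index := by
  have := Fintype.ofFinite ι
  choose j hj using fun i => herg.exists_index_mul_measure_eq_natCast hpmp (hP.1 i) (hPinv i)
  have hsum : ∑ i, j i = Fintype.card ι := by
    have hν : ∑ i, ν (P i) = 1 := by
      have := measure_iUnion (μ := ν) hP.2.1 hP.1
      rwa [hP.2.2, measure_univ, tsum_fintype, eq_comm] at this
    have : ((∑ i, j i : ℕ) : ℝ≥0∞) = Γ.index := by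
      rw [Nat.cast_sum, ← Finset.sum_congr rfl fun i _ => hj i, ← Finset.mul_sum, hν, mul_one]
    rw [← Nat.card_eq_fintype_card, hι]
    exact_mod_cast this
  have hone : ∀ i, (Γ.index : ℝ≥0∞) * ν (P i) = 1 := by
    intro i
    refine (hj i).trans ?_
    rw [Fintype.eq_one_of_sum_eq_card hsum (fun i hji => hPpos i ?_) i, Nat.cast_one]
    simpa [hji, Γ.index_ne_zero_of_finite] using hj i
  obtain e : Fin Γ.index ≃ ι := (Finite.equivFinOfCardEq hι).symm
  refine ⟨P ∘ e, fun i => hP.1 _, hP.2.1.comp_of_injective e.injective, ?_, fun i =>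
    ⟨hPinv (e i), pos_iff_ne_zero.2 (hPpos _),
      herg.restrict_of_index_mul_measure_eq_one hpmp (hP.1 _) (hPinv _) (hone _)⟩⟩
  rw [Function.comp_def, e.surjective.iUnion_comp P, hP.2.2, Set.compl_univ, measure_empty]

end Quantization

end Action

theorem stmt6_general {G X : Type*} [Group G] [Countable G] [MulAction G X]
    [mX : MeasurableSpace X]
    (μ : Measure X) (hpmp : IsPmp G μ)
    (Γ : Subgroup G) (hΓ : Γ.FiniteIndex)
    (P : Quotient (QuotientGroup.rightRel Γ) → Set X)
    (hP : IsCtblPart P)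
    (hPinv : ∀ c, ∀ γ : Γ, ((γ : G) • ·) ⁻¹' (P c) = P c)
    (hPorb : ∀ c, μ {x : X | ¬ ∃ g : G, g • x ∈ P c} = 0)
    (τ : Measure (Measure X))
    (hτ : ∀ᵐ ν ∂τ, IsProbabilityMeasure ν ∧ IsPmp G ν ∧ ErgAction G ν)
    (hτdec : ∀ s : Set X, MeasurableSet s → μ s = ∫⁻ ν, ν s ∂τ) :
    ∀ᵐ ν ∂τ, HasNErgComponents Γ ν Γ.index := by
  have : Γ.FiniteIndex := hΓ
  have hcard : Nat.card (Quotient (QuotientGroup.rightRel Γ)) = Γ.index :=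
    (Nat.card_congr (QuotientGroup.quotientRightRelEquivQuotientLeftRel Γ)).trans
      Γ.index_eq_card.symm
  have : Finite (Quotient (QuotientGroup.rightRel Γ)) :=
    Finite.of_equiv _ (QuotientGroup.quotientRightRelEquivQuotientLeftRel Γ).symm
  have hsat : ∀ᵐ ν ∂τ, ∀ c, ν {x : X | ¬ ∃ g : G, g • x ∈ P c} = 0 :=
    ae_all_iff.2 fun c => ae_measure_eq_zero_of_eq_lintegral hτdec
      (measurableSet_setOf_not_exists_smul_mem hpmp (hP.1 c)) (hPorb c)
  filter_upwards [hτ, hsat] with ν ⟨hprob, hpmpν, hergν⟩ hνsat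
  exact hergν.hasNErgComponents_of_partition hpmpν hcard hP hPinv fun c =>
    measure_ne_zero_of_ae_exists_smul_mem hpmpν (hP.1 c) (hνsat c)

theorem stmt6 {G X : Type*} [Group G] [Countable G] [MulAction G X]
    [mX : MeasurableSpace X] [StandardBorelSpace X]
    (μ : Measure X) [IsProbabilityMeasure μ] (hpmp : IsPmp G μ)
    (Γ : Subgroup G) (hΓ : Γ.FiniteIndex)
    (P : Quotient (QuotientGroup.rightRel Γ) → Set X)
    (hP : IsCtblPart P)
    (hPinv : ∀ c, ∀ γ : Γ, ((γ : G) • ·) ⁻¹' (P c) = P c)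
    (hPorb : ∀ c, μ {x : X | ¬ ∃ g : G, g • x ∈ P c} = 0)
    (hPmeas : ∀ c, μ (P c) = ((Γ.index : ℝ≥0∞))⁻¹)
    (hPsig₁ : LeModNull μ (invSigma Γ X) (partSigma P ⊔ invSigma G X))
    (hPsig₂ : LeModNull μ (partSigma P ⊔ invSigma G X) (invSigma Γ X))
    (τ : Measure (Measure X))
    (hτ : ∀ᵐ ν ∂τ, IsProbabilityMeasure ν ∧ IsPmp G ν ∧ ErgAction G ν)
    (hτdec : ∀ s : Set X, MeasurableSet s → μ s = ∫⁻ ν, ν s ∂τ) :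
    ∀ᵐ ν ∂τ, HasNErgComponents Γ ν Γ.index :=
  stmt6_general (mX := mX) μ hpmp Γ hΓ P hP hPinv hPorb τ hτ hτdec
end

section
/- Let G be a countable group, let G ↷ (Y, ν) and G ↷ (Z, η) be p.m.p. actions, and suppose G ↷ (Y, ν) weakly contains G ↷ (Z, η). Then for any p.m.p. action G ↷ (X, μ), the product joining G ↷ (X × Y, μ × ν) weakly contains G ↷ (X × Z, μ × η) as joinings with G ↷ (X, μ). -/
open MeasureTheory Set
open scoped ENNReal NNReal

theorem IsCtblPart.sum_measure_toReal {X ι : Type*} [MeasurableSpace X] [Fintype ι]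
    {μ : Measure X} [IsProbabilityMeasure μ] {P : ι → Set X} (hP : IsCtblPart P) :
    ∑ j, (μ (P j)).toReal = 1 := by
  rw [← ENNReal.toReal_sum fun j _ => measure_ne_top μ _, ← tsum_fintype (L := .unconditional _),
    ← measure_iUnion hP.2.1 hP.1, hP.2.2, measure_univ, ENNReal.toReal_one]

section ProductJoining

variable {X Y Z : Type*} [MeasurableSpace X] [MeasurableSpace Y] [MeasurableSpace Z]
  {μ : Measure X} {ν : Measure Y} {η : Measure Z} [SFinite ν] [SFinite η]

theorem abs_toReal_prod_sub_prod_fst_inter_snd (s : Set X) (t : Set Y) (u : Set Z) :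
    |(μ.prod ν (Prod.fst ⁻¹' s ∩ Prod.snd ⁻¹' t)).toReal -
      (μ.prod η (Prod.fst ⁻¹' s ∩ Prod.snd ⁻¹' u)).toReal| =
      (μ s).toReal * |(ν t).toReal - (η u).toReal| := by
  rw [← Set.prod_eq, ← Set.prod_eq, Measure.prod_prod, Measure.prod_prod,
    ENNReal.toReal_mul, ENNReal.toReal_mul, ← mul_sub, abs_mul,
    abs_of_nonneg ENNReal.toReal_nonneg]

theorem IsCtblPart.sum_abs_toReal_prod_sub_prod [IsProbabilityMeasure μ]
    {ι κ : Type*} [Fintype ι] [Fintype κ] {P : κ → Set X} (hP : IsCtblPart P)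
    (A : ι → Set Y) (B : ι → Set Z) :
    ∑ j, ∑ i, |(μ.prod ν (Prod.fst ⁻¹' P j ∩ Prod.snd ⁻¹' A i)).toReal -
      (μ.prod η (Prod.fst ⁻¹' P j ∩ Prod.snd ⁻¹' B i)).toReal| =
      ∑ i, |(ν (A i)).toReal - (η (B i)).toReal| := by
  simp_rw [abs_toReal_prod_sub_prod_fst_inter_snd, ← Finset.mul_sum, ← Finset.sum_mul,
    hP.sum_measure_toReal, one_mul]

end ProductJoining

theorem stmt9_general {G X Y Z : Type*} [Group G]
    [MulAction G X] [MulAction G Y] [MulAction G Z]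
    [mX : MeasurableSpace X] [mY : MeasurableSpace Y] [mZ : MeasurableSpace Z]
    (μ : Measure X) (ν : Measure Y) (η : Measure Z)
    [IsProbabilityMeasure μ] [IsProbabilityMeasure ν] [IsProbabilityMeasure η]
    (hwc : WeaklyContains G ν η) :
    WCJoin G (μ.prod ν) (μ.prod η) := by
  classical
  intro m k P hP γ hγ T ε hε
  obtain ⟨ζ, hζ, hsum⟩ := hwc k γ hγ T ε hε
  exact ⟨ζ, hζ, (hP.sum_abs_toReal_prod_sub_prod _ _).trans_lt hsum⟩

theorem stmt9 {G X Y Z : Type*} [Group G] [Countable G]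
    [MulAction G X] [MulAction G Y] [MulAction G Z]
    [mX : MeasurableSpace X] [mY : MeasurableSpace Y] [mZ : MeasurableSpace Z]
    (μ : Measure X) (ν : Measure Y) (η : Measure Z)
    [IsProbabilityMeasure μ] [IsProbabilityMeasure ν] [IsProbabilityMeasure η]
    (hX : IsPmp G μ) (hY : IsPmp G ν) (hZ : IsPmp G η)
    (hwc : WeaklyContains G ν η) :
    WCJoin G (μ.prod ν) (μ.prod η) :=
  stmt9_general (mX := mX) (mY := mY) (mZ := mZ) μ ν η hwc
end

section
/- Let G ↷ (X, μ), G ↷ (Z, η), and G ↷ (Y_i, ν_i) for i = 1, 2 be p.m.p. actions, with factor maps p : X → Z, q₁ : Y₁ → Z, q₂ : Y₂ → Z onto (Z, η). If G ↷ (Z × Y₁, (q₁ × id)_*(ν₁)) weakly contains G ↷ (Z × Y₂, (q₂ × id)_*(ν₂)) as joinings with G ↷ (Z, η), then G ↷ (X × Y₁, μ ⊗_η ν₁) weakly contains G ↷ (X × Y₂, μ ⊗_η ν₂) as joinings with G ↷ (X, μ). -/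
open MeasureTheory Set
open scoped ENNReal NNReal

/-!
On a rectangle `P × B` the relatively independent joining takes the value
`∫ μ_z(P) ν_z(B) dη(z)`, while the graph joining `(q × id)_* ν` takes the value `∫_C ν_z(B) dη(z)`
on `C × B`, because `ν_z` lives on the fibre `q⁻¹{z}`. Uniformly approximating the finitely many
functions `z ↦ μ_z(P_j)` within `δ` by step functions on a finite measurable partition `(C_w)` of
`Z` therefore bounds the `ℓ¹`-distance of the relatively independent joinings on `P_j × B_f` by
`2δ` plus the `ℓ¹`-distance of the graph joinings on `C_w × B_f`, which weak containment of the
graph joinings makes small.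
-/

open ProbabilityTheory

namespace IsCtblPart

variable {Y ι : Type*} [MeasurableSpace Y]

lemma preimage_singleton {α : Type*} [MeasurableSpace α] [MeasurableSingletonClass α]
    {v : Y → α} (hv : Measurable v) : IsCtblPart fun w => v ⁻¹' {w} :=
  ⟨fun _ => hv (measurableSet_singleton _), pairwise_disjoint_fiber v,
    eq_univ_of_forall fun y => mem_iUnion.2 ⟨v y, rfl⟩⟩

lemma iInter_preimage {Y' τ : Type*} [MeasurableSpace Y'] [Countable τ] {A : ι → Set Y'}
    (hA : IsCtblPart A) {φ : τ → Y → Y'} (hφ : ∀ t, Measurable (φ t)) :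
    IsCtblPart fun f : τ → ι => ⋂ t, φ t ⁻¹' A (f t) := by
  obtain ⟨hAm, hAd, hAu⟩ := hA
  refine ⟨fun f => .iInter fun t => hφ t (hAm _), fun f f' hff' => ?_, ?_⟩
  · obtain ⟨t, ht⟩ := Function.ne_iff.1 hff'
    exact ((hAd ht).preimage (φ t)).mono (iInter_subset _ t) (iInter_subset _ t)
  · refine eq_univ_of_forall fun y => ?_
    have hcover : ∀ t, ∃ i, φ t y ∈ A i := fun t => mem_iUnion.1 (hAu ▸ mem_univ (φ t y))
    choose f hf using hcover
    exact mem_iUnion.2 ⟨f, mem_iInter.2 hf⟩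

lemma sum_measureReal [Fintype ι] {A : ι → Set Y} (hA : IsCtblPart A) (μ : Measure Y)
    [IsProbabilityMeasure μ] : ∑ i, μ.real (A i) = 1 := by
  rw [← measureReal_iUnion_fintype hA.2.1 hA.1, hA.2.2, probReal_univ]

end IsCtblPart

lemma abs_sub_floor_div_le {N : ℕ} (hN : 0 < N) {x : ℝ} (hx : 0 ≤ x) :
    |x - ⌊N * x⌋₊ / N| ≤ 1 / N := by
  have hN' : (0 : ℝ) < N := Nat.cast_pos.2 hN
  have hlo : (⌊N * x⌋₊ : ℝ) ≤ N * x := Nat.floor_le (by positivity)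
  have hhi : N * x < ⌊N * x⌋₊ + 1 := Nat.lt_floor_add_one _
  rw [abs_le, le_sub_iff_add_le, sub_le_iff_le_add]
  constructor
  · rw [← sub_eq_neg_add, ← sub_div, div_le_iff₀ hN']
    linarith
  · rw [← add_div, le_div_iff₀ hN']
    linarith

lemma exists_measurable_fin_approx {Z ι : Type*} [MeasurableSpace Z] [Finite ι]
    {F : ι → Z → ℝ} (hF : ∀ i, Measurable (F i)) (hF01 : ∀ i z, F i z ∈ Icc (0 : ℝ) 1)
    {δ : ℝ} (hδ : 0 < δ) :
    ∃ (n : ℕ) (v : Z → Fin n) (a : ι → Fin n → ℝ),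
      Measurable v ∧ (∀ i w, |a i w| ≤ 1) ∧ ∀ i z, |F i z - a i (v z)| ≤ δ := by
  classical
  have := Fintype.ofFinite ι
  obtain ⟨N, hN⟩ := exists_nat_one_div_lt hδ
  set cell : Z → ι → Fin (N + 2) := fun z i => Fin.ofNat (N + 2) ⌊(N + 1 : ℕ) * F i z⌋₊
  have hcell : ∀ z i, ((cell z i : ℕ) : ℝ) = ⌊(N + 1 : ℕ) * F i z⌋₊ := by
    intro z i
    have hle : ⌊((N + 1 : ℕ) : ℝ) * F i z⌋₊ ≤ N + 1 := Nat.floor_le_of_le <| by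
      simpa using mul_le_of_le_one_right (by positivity) (hF01 i z).2
    simp only [cell, Fin.val_ofNat, Nat.mod_eq_of_lt (Nat.lt_succ_of_le hle)]
  have hcell_meas : Measurable cell := measurable_pi_lambda _ fun i =>
    (measurable_from_top (f := Fin.ofNat (N + 2))).comp
      (Nat.measurable_floor.comp (measurable_const.mul (hF i)))
  let e := Fintype.equivFin (ι → Fin (N + 2))
  refine ⟨_, e ∘ cell, fun i w => ((e.symm w i : ℕ) : ℝ) / (N + 1 : ℕ),
    (measurable_of_countable e).comp hcell_meas, fun i w => ?_, fun i z => ?_⟩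
  · rw [abs_of_nonneg (by positivity), div_le_one (by positivity)]
    exact_mod_cast (e.symm w i).is_le
  · simp only [Function.comp_apply, Equiv.symm_apply_apply, hcell]
    refine (abs_sub_floor_div_le N.succ_pos (hF01 i z).1).trans ?_
    simpa using hN.le

section StepFunction

variable {Z : Type*} [MeasurableSpace Z] {μ : Measure Z}

lemma integral_eq_sum_setIntegral_fiber {ι : Type*} [Fintype ι] [MeasurableSpace ι]
    [MeasurableSingletonClass ι] {v : Z → ι} (hv : Measurable v) {g : Z → ℝ}
    (hg : Integrable g μ) : ∫ z, g z ∂μ = ∑ w, ∫ z in v ⁻¹' {w}, g z ∂μ := by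
  have hv' := IsCtblPart.preimage_singleton hv
  rw [← integral_iUnion_fintype hv'.1 hv'.2.1 fun _ => hg.integrableOn, hv'.2.2, setIntegral_univ]

lemma abs_integral_mul_le_of_abs_sub_le {F H : Z → ℝ} {c δ : ℝ}
    (hFH : Integrable (fun z => F z * H z) μ) (hH : Integrable H μ)
    (hF : ∀ᵐ z ∂μ, |F z - c| ≤ δ) :
    |∫ z, F z * H z ∂μ| ≤ δ * ∫ z, |H z| ∂μ + |c| * |∫ z, H z ∂μ| := by
  have hcH : Integrable (fun z => c * H z) μ := hH.const_mul c
  have hsplit : ∫ z, F z * H z ∂μ = ∫ z, (F z - c) * H z ∂μ + c * ∫ z, H z ∂μ := by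
    rw [← integral_const_mul, ← integral_add _ hcH]
    · simp only [sub_mul, sub_add_cancel]
    · simpa only [sub_mul] using hFH.sub' hcH
  have herr : |∫ z, (F z - c) * H z ∂μ| ≤ δ * ∫ z, |H z| ∂μ := by
    rw [← integral_const_mul, ← Real.norm_eq_abs]
    refine norm_integral_le_of_norm_le (hH.abs.const_mul δ) ?_
    filter_upwards [hF] with z hz
    rw [Real.norm_eq_abs, abs_mul]
    exact mul_le_mul_of_nonneg_right hz (abs_nonneg _)
  rw [hsplit, ← abs_mul]
  exact (abs_add_le _ _).trans (add_le_add_left herr _)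

lemma abs_integral_mul_le_of_step {ι : Type*} [Fintype ι] [MeasurableSpace ι]
    [MeasurableSingletonClass ι] {F H : Z → ℝ} {v : Z → ι} {a : ι → ℝ} {δ : ℝ}
    (hF : Measurable F) (hv : Measurable v) (ha : ∀ w, |a w| ≤ 1)
    (hFa : ∀ z, |F z - a (v z)| ≤ δ) (hH : Integrable H μ) :
    |∫ z, F z * H z ∂μ| ≤ δ * ∫ z, |H z| ∂μ + ∑ w, |∫ z in v ⁻¹' {w}, H z ∂μ| := by
  have hFbdd : ∀ z, ‖F z‖ ≤ δ + 1 := fun z => by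
    rw [Real.norm_eq_abs, ← sub_add_cancel (F z) (a (v z))]
    exact (abs_add_le _ _).trans (add_le_add (hFa z) (ha _))
  have hFH : Integrable (fun z => F z * H z) μ :=
    hH.bdd_mul hF.aestronglyMeasurable (ae_of_all _ hFbdd)
  have hpiece : ∀ w, |∫ z in v ⁻¹' {w}, F z * H z ∂μ|
      ≤ δ * ∫ z in v ⁻¹' {w}, |H z| ∂μ + |∫ z in v ⁻¹' {w}, H z ∂μ| := by
    intro w
    have hFw : ∀ᵐ z ∂μ.restrict (v ⁻¹' {w}), |F z - a w| ≤ δ :=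
      (ae_restrict_iff' (hv (measurableSet_singleton w))).2 <|
        ae_of_all _ fun z (hz : v z = w) => hz ▸ hFa z
    refine (abs_integral_mul_le_of_abs_sub_le hFH.integrableOn hH.integrableOn hFw).trans ?_
    gcongr
    exact mul_le_of_le_one_left (abs_nonneg _) (ha w)
  rw [integral_eq_sum_setIntegral_fiber hv hFH, integral_eq_sum_setIntegral_fiber hv hH.abs,
    Finset.mul_sum, ← Finset.sum_add_distrib]
  exact (Finset.abs_sum_le_sum_abs _ _).trans (Finset.sum_le_sum fun w _ => hpiece w)

end StepFunction

namespace ProbabilityTheory.Kernel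

variable {Z Y : Type*} [MeasurableSpace Z] [MeasurableSpace Y]

lemma integrable_measureReal (ξ : Kernel Z Y) [IsFiniteKernel ξ] (η : Measure Z)
    [IsFiniteMeasure η] {B : Set Y} (hB : MeasurableSet B) :
    Integrable (fun z => (ξ z).real B) η :=
  .of_bound (ξ.measurable_coe hB).ennreal_toReal.aestronglyMeasurable ξ.bound.toReal <|
    ae_of_all _ fun z => by
      rw [Real.norm_of_nonneg measureReal_nonneg]
      exact ENNReal.toReal_mono ξ.bound_ne_top (ξ.measure_le_bound z B)

end ProbabilityTheory.Kernel

section Disintegration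

variable {Z X Y : Type*} [MeasurableSpace Z] [MeasurableSpace X] [MeasurableSpace Y]
  (η : Measure Z)

lemma bind_prod_apply_prod (κ : Kernel Z X) (ξ : Kernel Z Y) [IsSFiniteKernel κ]
    [IsSFiniteKernel ξ] {A : Set X} {B : Set Y} (hA : MeasurableSet A) (hB : MeasurableSet B) :
    (η.bind fun z => (κ z).prod (ξ z)) (A ×ˢ B) = ∫⁻ z, κ z A * ξ z B ∂η := by
  have hprod : (fun z => (κ z).prod (ξ z)) = ⇑(κ ×ₖ ξ) := funext fun z => (κ.prod_apply ξ z).symm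
  rw [hprod, Measure.bind_apply (hA.prod hB) (Kernel.aemeasurable _)]
  simp only [Kernel.prod_apply_prod]

lemma bind_prod_measureReal_prod (κ : Kernel Z X) (ξ : Kernel Z Y) [IsFiniteKernel κ]
    [IsFiniteKernel ξ] {A : Set X} {B : Set Y} (hA : MeasurableSet A) (hB : MeasurableSet B) :
    (η.bind fun z => (κ z).prod (ξ z)).real (A ×ˢ B) = ∫ z, (κ z).real A * (ξ z).real B ∂η := by
  rw [measureReal_def, bind_prod_apply_prod η κ ξ hA hB,
    ← integral_toReal (f := fun z => κ z A * ξ z B)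
      ((κ.measurable_coe hA).mul (ξ.measurable_coe hB)).aemeasurable
      (ae_of_all _ fun z => ENNReal.mul_lt_top (measure_lt_top _ _) (measure_lt_top _ _))]
  simp only [ENNReal.toReal_mul, measureReal_def]

variable {ν : Measure Y} (ξ : Kernel Z Y) {q : Y → Z}

lemma map_graph_apply_prod (hq : Measurable q) (hν : ν = η.bind ξ)
    (hfib : ∀ᵐ z ∂η, ∀ᵐ y ∂ξ z, q y = z) {C : Set Z} {B : Set Y} (hC : MeasurableSet C)
    (hB : MeasurableSet B) :
    (ν.map fun y => (q y, y)) (C ×ˢ B) = ∫⁻ z in C, ξ z B ∂η := by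
  rw [Measure.map_apply (hq.prodMk measurable_id') (hC.prod hB), mk_preimage_prod, preimage_id',
    hν, Measure.bind_apply ((hq hC).inter hB) ξ.aemeasurable, ← lintegral_indicator hC]
  refine lintegral_congr_ae ?_
  filter_upwards [hfib] with z hz
  by_cases hzC : z ∈ C
  · rw [indicator_of_mem hzC]
    refine measure_congr (hz.mono fun y (hy : q y = z) => ?_)
    change (y ∈ q ⁻¹' C ∩ B) = (y ∈ B)
    simp [hy, hzC]
  · rw [indicator_of_notMem hzC]
    refine measure_mono_null (fun y hy => ?_) (ae_iff.1 hz)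
    exact fun hqy => hzC (hqy ▸ hy.1)

lemma map_graph_measureReal_prod [IsFiniteKernel ξ] (hq : Measurable q) (hν : ν = η.bind ξ)
    (hfib : ∀ᵐ z ∂η, ∀ᵐ y ∂ξ z, q y = z) {C : Set Z} {B : Set Y} (hC : MeasurableSet C)
    (hB : MeasurableSet B) :
    (ν.map fun y => (q y, y)).real (C ×ˢ B) = ∫ z in C, (ξ z).real B ∂η := by
  rw [measureReal_def, map_graph_apply_prod η ξ hq hν hfib hC hB,
    ← integral_toReal (ξ.measurable_coe hB).aemeasurable (ae_of_all _ fun z => measure_lt_top _ _)]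
  rfl

end Disintegration

section RelativelyIndependentJoining

variable {Z X Y₁ Y₂ : Type*} [MeasurableSpace Z] [MeasurableSpace X] [MeasurableSpace Y₁]
  [MeasurableSpace Y₂] (η : Measure Z) [IsProbabilityMeasure η] (κ : Kernel Z X)
  (ξ₁ : Kernel Z Y₁) (ξ₂ : Kernel Z Y₂) [IsMarkovKernel κ] [IsMarkovKernel ξ₁] [IsMarkovKernel ξ₂]

lemma sum_abs_sub_bind_prod_le {ι ι' : Type*} [Fintype ι] [Fintype ι'] [MeasurableSpace ι']
    [MeasurableSingletonClass ι'] {B₁ : ι → Set Y₁} {B₂ : ι → Set Y₂} (hB₁ : IsCtblPart B₁)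
    (hB₂ : IsCtblPart B₂) {A : Set X} (hA : MeasurableSet A) {v : Z → ι'} (hv : Measurable v)
    {a : ι' → ℝ} {δ : ℝ} (ha : ∀ w, |a w| ≤ 1) (hAa : ∀ z, |(κ z).real A - a (v z)| ≤ δ) :
    ∑ f, |(η.bind fun z => (κ z).prod (ξ₁ z)).real (A ×ˢ B₁ f)
        - (η.bind fun z => (κ z).prod (ξ₂ z)).real (A ×ˢ B₂ f)|
      ≤ 2 * δ + ∑ w, ∑ f, |∫ z in v ⁻¹' {w}, (ξ₁ z).real (B₁ f) ∂η
        - ∫ z in v ⁻¹' {w}, (ξ₂ z).real (B₂ f) ∂η| := by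
  set H : ι → Z → ℝ := fun f z => (ξ₁ z).real (B₁ f) - (ξ₂ z).real (B₂ f)
  have hint₁ f := ξ₁.integrable_measureReal η (hB₁.1 f)
  have hint₂ f := ξ₂.integrable_measureReal η (hB₂.1 f)
  have hH f : Integrable (H f) η := (hint₁ f).sub (hint₂ f)
  have hδ : 0 ≤ δ := by
    obtain ⟨z⟩ := nonempty_of_isProbabilityMeasure η
    exact (abs_nonneg _).trans (hAa z)
  have hHsum z : ∑ f, |H f z| ≤ 2 := calc
    ∑ f, |H f z| ≤ ∑ f, ((ξ₁ z).real (B₁ f) + (ξ₂ z).real (B₂ f)) :=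
      Finset.sum_le_sum fun f _ => (abs_sub _ _).trans_eq <| by
        rw [abs_of_nonneg measureReal_nonneg, abs_of_nonneg measureReal_nonneg]
    _ = 2 := by
      rw [Finset.sum_add_distrib, hB₁.sum_measureReal, hB₂.sum_measureReal, one_add_one_eq_two]
  have hHint : ∑ f, ∫ z, |H f z| ∂η ≤ 2 := by
    rw [← integral_finsetSum _ fun f _ => (hH f).abs]
    calc ∫ z, ∑ f, |H f z| ∂η ≤ ∫ _, 2 ∂η :=
          integral_mono (integrable_finsetSum _ fun f _ => (hH f).abs) (integrable_const _) hHsum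
      _ = 2 := by simp
  have hκA : Measurable fun z => (κ z).real A := (κ.measurable_coe hA).ennreal_toReal
  have hκA_le z : ‖(κ z).real A‖ ≤ 1 := by
    rw [Real.norm_of_nonneg measureReal_nonneg]
    exact measureReal_le_one
  have hjoin f : (η.bind fun z => (κ z).prod (ξ₁ z)).real (A ×ˢ B₁ f)
      - (η.bind fun z => (κ z).prod (ξ₂ z)).real (A ×ˢ B₂ f) = ∫ z, (κ z).real A * H f z ∂η := by
    rw [bind_prod_measureReal_prod η κ ξ₁ hA (hB₁.1 f),
      bind_prod_measureReal_prod η κ ξ₂ hA (hB₂.1 f), ← integral_sub]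
    · simp only [H, mul_sub]
    · exact (hint₁ f).bdd_mul hκA.aestronglyMeasurable (ae_of_all _ hκA_le)
    · exact (hint₂ f).bdd_mul hκA.aestronglyMeasurable (ae_of_all _ hκA_le)
  have hcell w f : ∫ z in v ⁻¹' {w}, (ξ₁ z).real (B₁ f) ∂η
      - ∫ z in v ⁻¹' {w}, (ξ₂ z).real (B₂ f) ∂η = ∫ z in v ⁻¹' {w}, H f z ∂η :=
    (integral_sub (hint₁ f).integrableOn (hint₂ f).integrableOn).symm
  simp only [hjoin, hcell]
  calc ∑ f, |∫ z, (κ z).real A * H f z ∂η|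
      ≤ ∑ f, (δ * ∫ z, |H f z| ∂η + ∑ w, |∫ z in v ⁻¹' {w}, H f z ∂η|) :=
        Finset.sum_le_sum fun f _ => abs_integral_mul_le_of_step hκA hv ha hAa (hH f)
    _ = δ * ∑ f, ∫ z, |H f z| ∂η + ∑ w, ∑ f, |∫ z in v ⁻¹' {w}, H f z ∂η| := by
        rw [Finset.sum_add_distrib, Finset.mul_sum, Finset.sum_comm]
    _ ≤ 2 * δ + ∑ w, ∑ f, |∫ z in v ⁻¹' {w}, H f z ∂η| := by
        rw [mul_comm 2 δ]
        gcongr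

end RelativelyIndependentJoining

theorem WCJoin.bind_prod_of_map_graph {G Z X Y₁ Y₂ : Type*} [Group G] [MulAction G Z]
    [MulAction G X] [MulAction G Y₁] [MulAction G Y₂] [MeasurableSpace Z] [MeasurableSpace X]
    [MeasurableSpace Y₁] [MeasurableSpace Y₂] [MeasurableConstSMul G Y₁]
    [MeasurableConstSMul G Y₂] (η : Measure Z) [IsProbabilityMeasure η] (κ : Kernel Z X)
    (ξ₁ : Kernel Z Y₁) (ξ₂ : Kernel Z Y₂) [IsMarkovKernel κ] [IsMarkovKernel ξ₁]
    [IsMarkovKernel ξ₂] {ν₁ : Measure Y₁} {ν₂ : Measure Y₂} {q₁ : Y₁ → Z} {q₂ : Y₂ → Z}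
    (hq₁ : Measurable q₁) (hq₂ : Measurable q₂) (hν₁ : ν₁ = η.bind ξ₁) (hν₂ : ν₂ = η.bind ξ₂)
    (hfib₁ : ∀ᵐ z ∂η, ∀ᵐ y ∂ξ₁ z, q₁ y = z) (hfib₂ : ∀ᵐ z ∂η, ∀ᵐ y ∂ξ₂ z, q₂ y = z)
    (hwc : WCJoin G (ν₁.map fun y => (q₁ y, y)) (ν₂.map fun y => (q₂ y, y))) :
    WCJoin G (η.bind fun z => (κ z).prod (ξ₁ z)) (η.bind fun z => (κ z).prod (ξ₂ z)) := by
  -- the instance with which `WCJoin` forms its sums over `↥T → Fin k`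
  let : DecidableEq G := Classical.decEq G
  intro m k P hP γ hγ T ε hε
  obtain ⟨n, v, a, hv, ha, hPa⟩ := exists_measurable_fin_approx (F := fun j z => (κ z).real (P j))
    (fun j => (κ.measurable_coe (hP.1 j)).ennreal_toReal)
    (fun j z => ⟨measureReal_nonneg, measureReal_le_one⟩) (δ := ε / (4 * (m + 1))) (by positivity)
  obtain ⟨ζ, hζ, hS⟩ := hwc n k (fun w => v ⁻¹' {w}) (.preimage_singleton hv) γ hγ T
    (ε / (2 * (m + 1))) (by positivity)
  refine ⟨ζ, hζ, ?_⟩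
  have hB₁ := hζ.iInter_preimage fun t : T => measurable_const_smul (t : G)
  have hB₂ := hγ.iInter_preimage fun t : T => measurable_const_smul (t : G)
  simp only [← prod_eq, ← measureReal_def] at hS ⊢
  simp only [map_graph_measureReal_prod η ξ₁ hq₁ hν₁ hfib₁ (hv (measurableSet_singleton _))
    (hB₁.1 _), map_graph_measureReal_prod η ξ₂ hq₂ hν₂ hfib₂ (hv (measurableSet_singleton _))
    (hB₂.1 _)] at hS
  refine (Finset.sum_le_sum fun j _ =>
    sum_abs_sub_bind_prod_le η κ ξ₁ ξ₂ hB₁ hB₂ (hP.1 j) hv (ha j) (hPa j)).trans_lt ?_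
  rw [Finset.sum_const, Finset.card_univ, Fintype.card_fin, nsmul_eq_mul]
  have hm : (0 : ℝ) < m + 1 := by positivity
  have hbudget : 2 * (ε / (4 * (m + 1))) + ε / (2 * (m + 1)) = ε / (m + 1) := by
    field_simp
    ring
  calc _ ≤ (m : ℝ) * (ε / (m + 1)) := by gcongr; linarith
    _ < ε := by
      rw [mul_div_assoc', div_lt_iff₀ hm]
      linarith

theorem stmt10_general {G X Y₁ Y₂ Z : Type*} [Group G]
    [MulAction G X] [MulAction G Y₁] [MulAction G Y₂] [MulAction G Z]
    [mX : MeasurableSpace X]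
    [mY₁ : MeasurableSpace Y₁]
    [mY₂ : MeasurableSpace Y₂]
    [mZ : MeasurableSpace Z] [StandardBorelSpace Z]
    (ν₁ : Measure Y₁) (ν₂ : Measure Y₂) (η : Measure Z)
    [IsProbabilityMeasure η]
    (hY₁ : IsPmp G ν₁) (hY₂ : IsPmp G ν₂)
    (q₁ : Y₁ → Z) (q₂ : Y₂ → Z)
    (hq₁ : MeasurePreserving q₁ ν₁ η)
    (hq₂ : MeasurePreserving q₂ ν₂ η)
    (μz : Z → Measure X) (ν₁z : Z → Measure Y₁) (ν₂z : Z → Measure Y₂)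
    (hμker : ∀ s : Set X, MeasurableSet s → Measurable fun z => μz z s)
    (hν₁ker : ∀ s : Set Y₁, MeasurableSet s → Measurable fun z => ν₁z z s)
    (hν₂ker : ∀ s : Set Y₂, MeasurableSet s → Measurable fun z => ν₂z z s)
    (hμprob : ∀ z, IsProbabilityMeasure (μz z))
    (hν₁prob : ∀ z, IsProbabilityMeasure (ν₁z z))
    (hν₂prob : ∀ z, IsProbabilityMeasure (ν₂z z))
    (hν₁dis : ∀ s : Set Y₁, MeasurableSet s → ν₁ s = ∫⁻ z, ν₁z z s ∂η)
    (hν₂dis : ∀ s : Set Y₂, MeasurableSet s → ν₂ s = ∫⁻ z, ν₂z z s ∂η)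
    (hν₁fib : ∀ᵐ z ∂η, ν₁z z (q₁ ⁻¹' {z}) = 1)
    (hν₂fib : ∀ᵐ z ∂η, ν₂z z (q₂ ⁻¹' {z}) = 1)
    (hwc : WCJoin G (Measure.map (fun y => (q₁ y, y)) ν₁)
                    (Measure.map (fun y => (q₂ y, y)) ν₂)) :
    WCJoin G (η.bind fun z => (μz z).prod (ν₁z z))
             (η.bind fun z => (μz z).prod (ν₂z z)) := by
  let κ : Kernel Z X := ⟨μz, Measure.measurable_measure.2 hμker⟩
  let ξ₁ : Kernel Z Y₁ := ⟨ν₁z, Measure.measurable_measure.2 hν₁ker⟩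
  let ξ₂ : Kernel Z Y₂ := ⟨ν₂z, Measure.measurable_measure.2 hν₂ker⟩
  have : IsMarkovKernel κ := ⟨hμprob⟩
  have : IsMarkovKernel ξ₁ := ⟨hν₁prob⟩
  have : IsMarkovKernel ξ₂ := ⟨hν₂prob⟩
  have : MeasurableConstSMul G Y₁ := ⟨fun g => (hY₁ g).measurable⟩
  have : MeasurableConstSMul G Y₂ := ⟨fun g => (hY₂ g).measurable⟩
  refine WCJoin.bind_prod_of_map_graph η κ ξ₁ ξ₂ hq₁.measurable hq₂.measurable
    (Measure.ext fun s hs => (hν₁dis s hs).trans (Measure.bind_apply hs ξ₁.aemeasurable).symm)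
    (Measure.ext fun s hs => (hν₂dis s hs).trans (Measure.bind_apply hs ξ₂.aemeasurable).symm)
    ?_ ?_ hwc
  · exact hν₁fib.mono fun z hz =>
      (mem_ae_iff_prob_eq_one (hq₁.measurable (measurableSet_singleton z))).2 hz
  · exact hν₂fib.mono fun z hz =>
      (mem_ae_iff_prob_eq_one (hq₂.measurable (measurableSet_singleton z))).2 hz

theorem stmt10 {G X Y₁ Y₂ Z : Type*} [Group G] [Countable G]
    [MulAction G X] [MulAction G Y₁] [MulAction G Y₂] [MulAction G Z]
    [mX : MeasurableSpace X] [StandardBorelSpace X]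
    [mY₁ : MeasurableSpace Y₁] [StandardBorelSpace Y₁]
    [mY₂ : MeasurableSpace Y₂] [StandardBorelSpace Y₂]
    [mZ : MeasurableSpace Z] [StandardBorelSpace Z]
    (μ : Measure X) (ν₁ : Measure Y₁) (ν₂ : Measure Y₂) (η : Measure Z)
    [IsProbabilityMeasure μ] [IsProbabilityMeasure ν₁] [IsProbabilityMeasure ν₂]
    [IsProbabilityMeasure η]
    (hX : IsPmp G μ) (hY₁ : IsPmp G ν₁) (hY₂ : IsPmp G ν₂) (hZ : IsPmp G η)
    (p : X → Z) (q₁ : Y₁ → Z) (q₂ : Y₂ → Z)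
    (hp : MeasurePreserving p μ η) (hq₁ : MeasurePreserving q₁ ν₁ η)
    (hq₂ : MeasurePreserving q₂ ν₂ η)
    (hpe : ∀ (g : G) (x : X), p (g • x) = g • p x)
    (hq₁e : ∀ (g : G) (y : Y₁), q₁ (g • y) = g • q₁ y)
    (hq₂e : ∀ (g : G) (y : Y₂), q₂ (g • y) = g • q₂ y)
    (μz : Z → Measure X) (ν₁z : Z → Measure Y₁) (ν₂z : Z → Measure Y₂)
    (hμker : ∀ s : Set X, MeasurableSet s → Measurable fun z => μz z s)
    (hν₁ker : ∀ s : Set Y₁, MeasurableSet s → Measurable fun z => ν₁z z s)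
    (hν₂ker : ∀ s : Set Y₂, MeasurableSet s → Measurable fun z => ν₂z z s)
    (hμprob : ∀ z, IsProbabilityMeasure (μz z))
    (hν₁prob : ∀ z, IsProbabilityMeasure (ν₁z z))
    (hν₂prob : ∀ z, IsProbabilityMeasure (ν₂z z))
    (hμdis : ∀ s : Set X, MeasurableSet s → μ s = ∫⁻ z, μz z s ∂η)
    (hν₁dis : ∀ s : Set Y₁, MeasurableSet s → ν₁ s = ∫⁻ z, ν₁z z s ∂η)
    (hν₂dis : ∀ s : Set Y₂, MeasurableSet s → ν₂ s = ∫⁻ z, ν₂z z s ∂η)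
    (hμfib : ∀ᵐ z ∂η, μz z (p ⁻¹' {z}) = 1)
    (hν₁fib : ∀ᵐ z ∂η, ν₁z z (q₁ ⁻¹' {z}) = 1)
    (hν₂fib : ∀ᵐ z ∂η, ν₂z z (q₂ ⁻¹' {z}) = 1)
    (hwc : WCJoin G (Measure.map (fun y => (q₁ y, y)) ν₁)
                    (Measure.map (fun y => (q₂ y, y)) ν₂)) :
    WCJoin G (η.bind fun z => (μz z).prod (ν₁z z))
             (η.bind fun z => (μz z).prod (ν₂z z)) :=
  stmt10_general (mX := mX) (mY₁ := mY₁) (mY₂ := mY₂) (mZ := mZ) ν₁ ν₂ η hY₁ hY₂ q₁ q₂ hq₁ hq₂ μz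
    ν₁z ν₂z hμker hν₁ker hν₂ker hμprob hν₁prob hν₂prob hν₁dis hν₂dis hν₁fib hν₂fib hwc
end
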